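/- arXiv:2212.00447 — 8 statements merged into one kernel-verified Lean document; each statement's English description precedes it below -/
import Mathlib

section
/- For any function g : [0,1] → ℝ^d with finite p-variation (p ≥ 1) and any n ∈ ℕ, the Riemann sum approximation satisfies sup_{u ∈ [0,1]} ‖(1/n) ∑_{t=1}^{⌊un⌋} g(t/n) − ∫_0^{⌊un⌋/n} g(v) dv‖ ≤ n^{−1/p} ‖g‖_{p-var}, where ‖g‖_{p-var} = sup over all partitions 0 = u_0 < u_1 < … < u_m = 1 of (∑_{i=1}^m ‖g(u_i) − g(u_{i−1})‖^p)^{1/p}. -/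
/-!
Substituting `v = (s + t) / n` on each cell `[t/n, (t+1)/n]`, the error of the Riemann
sum becomes `n⁻¹ ∫₀¹ ∑_{t<k} (g((t+1)/n) - g((s+t)/n)) ds` with `k = ⌊un⌋ ≤ n`. For
fixed `s ∈ (0,1)` the points `t/n < (s+t)/n < (t+1)/n` form an increasing sequence in
`[0,1]`, so the `p`-th powers of the `k` summands add up to at most `‖g‖_{p-var}^p`;
Hölder's inequality then bounds their sum by `k^{1-1/p} ‖g‖_{p-var} ≤ n^{1-1/p} ‖g‖_{p-var}`.
-/

open MeasureTheory Finset

/-- The set of partition sums defining the `p`-variation of `g` on `[0,1]`. -/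
noncomputable def pVarSums {E : Type*} [NormedAddCommGroup E] (p : ℝ) (g : ℝ → E) : Set ℝ :=
  {V | ∃ (m : ℕ) (u : ℕ → ℝ), 0 < m ∧ u 0 = 0 ∧ u m = 1 ∧
    (∀ i < m, u i < u (i + 1)) ∧
    V = (∑ i ∈ Finset.range m, ‖g (u (i + 1)) - g (u i)‖ ^ p) ^ (1 / p)}

/-- The `p`-variation of `g` on `[0,1]`. -/
noncomputable def pVar {E : Type*} [NormedAddCommGroup E] (p : ℝ) (g : ℝ → E) : ℝ :=
  sSup (pVarSums p g)

namespace Real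

theorem sum_le_card_rpow_mul_rpow_sum_rpow {ι : Type*} (s : Finset ι) {f : ι → ℝ}
    (hf : ∀ i ∈ s, 0 ≤ f i) {p : ℝ} (hp : 1 ≤ p) :
    ∑ i ∈ s, f i ≤ (#s : ℝ) ^ (1 - 1 / p) * (∑ i ∈ s, f i ^ p) ^ (1 / p) := by
  have hp0 : 0 < p := one_pos.trans_le hp
  have hsum : 0 ≤ ∑ i ∈ s, f i := sum_nonneg hf
  calc ∑ i ∈ s, f i = ((∑ i ∈ s, f i) ^ p) ^ (1 / p) := by
        rw [← rpow_mul hsum, mul_one_div_cancel hp0.ne', rpow_one]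
    _ ≤ ((#s : ℝ) ^ (p - 1) * ∑ i ∈ s, f i ^ p) ^ (1 / p) := by
        gcongr
        exact rpow_sum_le_const_mul_sum_rpow_of_nonneg s hp hf
    _ = (#s : ℝ) ^ (1 - 1 / p) * (∑ i ∈ s, f i ^ p) ^ (1 / p) := by
        rw [mul_rpow (by positivity) (sum_nonneg fun i hi => rpow_nonneg (hf i hi) p),
          ← rpow_mul (by positivity)]
        congr 2
        field_simp

end Real

section PVariation

variable {E : Type*} [NormedAddCommGroup E] {p : ℝ} {g : ℝ → E}

theorem rpow_sum_norm_sub_le_pVar (hfin : BddAbove (pVarSums p g)) (hp : 0 ≤ p) {M : ℕ}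
    {w : ℕ → ℝ} (hw0 : w 0 = 0) (hwM : w M ≤ 1) (hw : ∀ i < M, w i < w (i + 1)) :
    (∑ i ∈ range M, ‖g (w (i + 1)) - g (w i)‖ ^ p) ^ (1 / p) ≤ pVar p g := by
  rcases hwM.eq_or_lt with hwM | hwM
  · have hM : M ≠ 0 := by rintro rfl; simp [hw0] at hwM
    exact le_csSup hfin ⟨M, w, Nat.pos_of_ne_zero hM, hw0, hwM, hw, rfl⟩
  · set w' := Function.update w (M + 1) 1
    have hw'M : w' (M + 1) = 1 := Function.update_self ..
    have hw'_eq : ∀ i ≤ M, w' i = w i := fun i hi => Function.update_of_ne (by omega) ..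
    have hw' : ∀ i < M + 1, w' i < w' (i + 1) := by
      intro i hi
      rcases (Nat.lt_succ_iff.mp hi).lt_or_eq with hi | rfl
      · rw [hw'_eq i hi.le, hw'_eq (i + 1) hi]; exact hw i hi
      · rwa [hw'_eq i le_rfl, hw'M]
    have hw'0 : w' 0 = 0 := by rw [hw'_eq 0 M.zero_le, hw0]
    refine le_trans ?_ (le_csSup hfin ⟨M + 1, w', M.succ_pos, hw'0, hw'M, hw', rfl⟩)
    gcongr
    rw [sum_range_succ]
    refine le_add_of_le_of_nonneg (le_of_eq (sum_congr rfl fun i hi => ?_)) (by positivity)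
    rw [mem_range] at hi
    rw [hw'_eq i hi.le, hw'_eq (i + 1) hi]

theorem rpow_sum_norm_sub_shifted_grid_le_pVar (hfin : BddAbove (pVarSums p g)) (hp : 0 ≤ p)
    {h s : ℝ} (hh : 0 < h) (hs : s ∈ Set.Ioo 0 1) {k : ℕ} (hk : k * h ≤ 1) :
    (∑ t ∈ range k, ‖g ((t + 1) * h) - g ((s + t) * h)‖ ^ p) ^ (1 / p) ≤ pVar p g := by
  -- the grid points `t * h` interleaved with the shifted points `(s + t) * h`
  set w : ℕ → ℝ := fun j => ((j / 2 : ℕ) + (j % 2 : ℕ) * s) * h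
  have hw_even (t : ℕ) : w (2 * t) = t * h := by simp [w]
  have hw_odd (t : ℕ) : w (2 * t + 1) = (s + t) * h := by
    simp only [w, show (2 * t + 1) / 2 = t by omega, show (2 * t + 1) % 2 = 1 by omega]
    push_cast; ring
  have hw_succ_odd (t : ℕ) : w (2 * t + 1 + 1) = (t + 1) * h := by
    rw [show 2 * t + 1 + 1 = 2 * (t + 1) by ring, hw_even]; push_cast; rfl
  have hw : ∀ i < 2 * k, w i < w (i + 1) := by
    intro i _
    obtain ⟨t, rfl | rfl⟩ := Nat.even_or_odd' i
    · rw [hw_even, hw_odd]; nlinarith [hs.1]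
    · rw [hw_odd, hw_succ_odd]; nlinarith [hs.2]
  set a : ℕ → ℝ := fun i => ‖g (w (i + 1)) - g (w i)‖ ^ p
  have hodd : ∑ t ∈ range k, a (2 * t + 1) ≤ ∑ i ∈ range (2 * k), a i := by
    rw [← sum_image (fun _ _ _ _ h => by omega)]
    exact sum_le_sum_of_subset_of_nonneg (fun i => by simp; omega) fun _ _ _ => by positivity
  calc (∑ t ∈ range k, ‖g ((t + 1) * h) - g ((s + t) * h)‖ ^ p) ^ (1 / p)
      = (∑ t ∈ range k, a (2 * t + 1)) ^ (1 / p) := by simp only [a, hw_odd, hw_succ_odd]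
    _ ≤ (∑ i ∈ range (2 * k), a i) ^ (1 / p) := by gcongr
    _ ≤ pVar p g := rpow_sum_norm_sub_le_pVar hfin hp (by simpa using hw_even 0)
        (by rwa [hw_even]) hw

theorem norm_sum_sub_shifted_grid_le (hfin : BddAbove (pVarSums p g)) (hp : 1 ≤ p) {n k : ℕ}
    (hn : 0 < n) (hkn : k ≤ n) {s : ℝ} (hs : s ∈ Set.Ioo 0 1) :
    ‖∑ t ∈ range k, (g ((t + 1) * (n : ℝ)⁻¹) - g ((s + t) * (n : ℝ)⁻¹))‖
      ≤ (n : ℝ) ^ (1 - 1 / p) * pVar p g := by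
  have hn0 : (0 : ℝ) < n := by exact_mod_cast hn
  have hk : (k : ℝ) * (n : ℝ)⁻¹ ≤ 1 := by
    rw [← div_eq_mul_inv, div_le_one hn0]; exact_mod_cast hkn
  set a : ℕ → ℝ := fun t => ‖g ((t + 1) * (n : ℝ)⁻¹) - g ((s + t) * (n : ℝ)⁻¹)‖
  calc _ ≤ ∑ t ∈ range k, a t := norm_sum_le _ _
    _ ≤ (k : ℝ) ^ (1 - 1 / p) * (∑ t ∈ range k, a t ^ p) ^ (1 / p) := by
        simpa using Real.sum_le_card_rpow_mul_rpow_sum_rpow (range k) (fun _ _ => norm_nonneg _) hp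
    _ ≤ (n : ℝ) ^ (1 - 1 / p) * pVar p g := by
        gcongr
        · exact sub_nonneg.2 (one_div_le_one_div_of_le one_pos hp |>.trans_eq one_div_one)
        · exact rpow_sum_norm_sub_shifted_grid_le_pVar hfin (by linarith) (by positivity) hs hk

end PVariation

theorem smul_sum_sub_integral_eq_smul_integral_sum {E : Type*} [NormedAddCommGroup E]
    [NormedSpace ℝ E] [CompleteSpace E] (g : ℝ → E) {h : ℝ} (hh : h ≠ 0) {k : ℕ}
    (hg : IntervalIntegrable g volume 0 (k * h)) :
    h • ∑ t ∈ range k, g ((t + 1) * h) - ∫ v in 0..k * h, g v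
      = h • ∫ s in 0..1, ∑ t ∈ range k, (g ((t + 1) * h) - g ((s + t) * h)) := by
  have hcell : ∀ t < k, IntervalIntegrable (fun x => g (x * h)) volume t (t + 1) := by
    have hgh := hg.comp_mul_right (c := h)
    rw [zero_div, mul_div_cancel_right₀ _ hh] at hgh
    intro t ht
    refine hgh.mono_set (Set.uIcc_subset_uIcc ?_ ?_) <;>
      rw [Set.uIcc_of_le (Nat.cast_nonneg k)] <;> constructor <;> norm_cast <;> omega
  have hshift : ∀ t ∈ range k, IntervalIntegrable (fun s => g ((s + t) * h)) volume 0 1 := by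
    intro t ht
    simpa using (hcell t (mem_range.1 ht)).comp_add_right (t : ℝ)
  have hcells :
      ∑ t ∈ range k, ∫ x in (t : ℝ)..t + 1, g (x * h) = ∫ x in (0 : ℝ)..k, g (x * h) := by
    simpa using intervalIntegral.sum_integral_adjacent_intervals (a := fun t : ℕ => (t : ℝ))
      (by simpa using hcell)
  have hintegral :
      ∫ v in 0..k * h, g v = h • ∫ s in 0..1, ∑ t ∈ range k, g ((s + t) * h) := by
    rw [intervalIntegral.integral_finsetSum hshift]
    simp only [intervalIntegral.integral_comp_add_right (fun x => g (x * h)), zero_add]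
    simp_rw [add_comm (1 : ℝ)]
    rw [hcells, intervalIntegral.smul_integral_comp_mul_right, zero_mul]
  have hsumint : IntervalIntegrable (fun s => ∑ t ∈ range k, g ((s + t) * h)) volume 0 1 := by
    simpa only [sum_fn] using IntervalIntegrable.sum _ hshift
  simp only [sum_sub_distrib]
  rw [intervalIntegral.integral_sub intervalIntegrable_const hsumint,
    intervalIntegral.integral_const, hintegral, sub_zero, one_smul, smul_sub]

/-- Riemann sum approximation for functions of bounded `p`-variation:
`sup_{u∈[0,1]} ‖(1/n) ∑_{t=1}^{⌊un⌋} g(t/n) − ∫_0^{⌊un⌋/n} g(v) dv‖ ≤ n^{−1/p} ‖g‖_{p-var}`. -/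
theorem stmt_0 {d : ℕ} (p : ℝ) (hp : 1 ≤ p) (g : ℝ → EuclideanSpace ℝ (Fin d))
    (hfin : BddAbove (pVarSums p g))
    (hint : IntervalIntegrable g volume 0 1)
    (n : ℕ) (hn : 0 < n) :
    ∀ u ∈ Set.Icc (0 : ℝ) 1,
      ‖(n : ℝ)⁻¹ • ∑ t ∈ Finset.Icc 1 ⌊u * n⌋₊, g ((t : ℝ) / n)
          - ∫ v in (0 : ℝ)..((⌊u * n⌋₊ : ℝ) / n), g v‖
        ≤ (n : ℝ) ^ (-(1 / p)) * pVar p g := by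
  intro u hu
  have hn0 : (0 : ℝ) < n := by exact_mod_cast hn
  set k := ⌊u * n⌋₊
  have hkn : k ≤ n := Nat.floor_le_of_le (mul_le_of_le_one_left hn0.le hu.2)
  have hgk : IntervalIntegrable g volume 0 (k * (n : ℝ)⁻¹) :=
    hint.mono_set <| Set.uIcc_subset_uIcc_left <| by
      rw [Set.uIcc_of_le zero_le_one, ← div_eq_mul_inv, Set.mem_Icc, div_le_one hn0]
      exact ⟨by positivity, by exact_mod_cast hkn⟩
  have hsum :
      ∑ t ∈ Icc 1 k, g ((t : ℝ) / n) = ∑ t ∈ range k, g ((t + 1) * (n : ℝ)⁻¹) := by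
    rw [← Ico_add_one_right_eq_Icc, sum_Ico_eq_sum_range, Nat.add_sub_cancel]
    exact sum_congr rfl fun t _ => by push_cast; rw [add_comm (1 : ℝ), div_eq_mul_inv]
  calc _ = ‖(n : ℝ)⁻¹ • ∫ s in 0..1, ∑ t ∈ range k,
            (g ((t + 1) * (n : ℝ)⁻¹) - g ((s + t) * (n : ℝ)⁻¹))‖ := by
        rw [hsum, div_eq_mul_inv (k : ℝ), smul_sum_sub_integral_eq_smul_integral_sum g
          (inv_ne_zero hn0.ne') hgk]
    _ ≤ (n : ℝ)⁻¹ * ((n : ℝ) ^ (1 - 1 / p) * pVar p g * |1 - 0|) := by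
        rw [norm_smul, Real.norm_of_nonneg (by positivity)]
        gcongr
        refine intervalIntegral.norm_integral_le_of_norm_le_const_ae ?_
        -- at `s = 1` the interleaved grid points are not strictly increasing
        filter_upwards [Measure.ae_ne volume 1] with s hs1 hs
        rw [Set.uIoc_of_le zero_le_one] at hs
        exact norm_sum_sub_shifted_grid_le hfin hp hn hkn ⟨hs.1, hs.2.lt_of_ne hs1⟩
    _ = (n : ℝ) ^ (-(1 / p)) * pVar p g := by
        rw [sub_zero, abs_one, mul_one, ← mul_assoc, Real.rpow_sub hn0, Real.rpow_one,
          Real.rpow_neg hn0.le]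
        field_simp
end

section
/- Let (a_t)_{t=1}^n be a finite sequence in a normed space with ∑_{t=2}^n ‖a_t − a_{t−1}‖^p ≤ V^p for some p ∈ [1, 2] and suppose ‖a_t‖ ≤ B for all t. Then for any lag L with 1 ≤ L < n, (1/n) ∑_{t=L+1}^n ‖a_t − a_{t−L}‖^2 ≤ (2B)^{2−p} · L^p · V^p / n. -/
/-!
Write `x = ‖a_t − a_{t−L}‖ ≤ 2B` and split `x² = x^{2−p} x^p ≤ (2B)^{2−p} x^p`. Telescoping
`a_t − a_{t−L}` over the `L` unit steps and applying the power-mean inequality gives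
`x^p ≤ L^{p−1} ∑_{i<L} ‖a_{t−i} − a_{t−i−1}‖^p`. Summing over `t`, each of the `L` shifted
sums of unit increments is part of the `p`-variation, hence at most `V^p`, and
`L^{p−1} · L = L^p`.
-/

open Finset

theorem norm_sub_lag_le_sum_norm_sub {E : Type*} [SeminormedAddCommGroup E] (a : ℕ → E)
    (t L : ℕ) : ‖a t - a (t - L)‖ ≤ ∑ i ∈ range L, ‖a (t - i) - a (t - i - 1)‖ := by
  have htelescope : ∑ i ∈ range L, (a (t - i) - a (t - i - 1)) = a t - a (t - L) := by
    simpa only [Nat.sub_sub, Nat.sub_zero] using sum_range_sub' (fun i => a (t - i)) L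
  exact htelescope ▸ norm_sum_le _ _

theorem rpow_two_le_rpow_sub_mul_rpow {x M p : ℝ} (hx : 0 ≤ x) (hxM : x ≤ M) (hp : 0 ≤ p)
    (hp2 : p ≤ 2) : x ^ (2 : ℝ) ≤ M ^ (2 - p) * x ^ p :=
  calc x ^ (2 : ℝ) = x ^ (2 - p) * x ^ p := by
        rw [← Real.rpow_add_of_nonneg hx (by linarith) hp, sub_add_cancel]
    _ ≤ M ^ (2 - p) * x ^ p := by gcongr

theorem sum_Icc_comp_sub_le_sum_Icc {f : ℕ → ℝ} (hf : ∀ s, 0 ≤ f s) {L n i : ℕ} (hi : i < L) :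
    ∑ t ∈ Icc (L + 1) n, f (t - i) ≤ ∑ s ∈ Icc 2 n, f s := by
  have hinj : Set.InjOn (· - i) (Icc (L + 1) n : Set ℕ) := by
    intro t ht u hu h
    simp only [coe_Icc, Set.mem_Icc] at ht hu h
    omega
  rw [← sum_image hinj]
  refine sum_le_sum_of_subset_of_nonneg ?_ fun s _ _ => hf s
  intro s
  simp only [mem_image, mem_Icc]
  rintro ⟨t, ht, rfl⟩
  omega

section LagBound

variable {E : Type*} [SeminormedAddCommGroup E] {p B : ℝ} {a : ℕ → E}

theorem norm_sub_lag_rpow_two_le (hp1 : 1 ≤ p) (hp2 : p ≤ 2) {t L : ℕ} (ht : ‖a t‖ ≤ B)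
    (htL : ‖a (t - L)‖ ≤ B) :
    ‖a t - a (t - L)‖ ^ (2 : ℝ) ≤
      (2 * B) ^ (2 - p) * ((L : ℝ) ^ (p - 1) * ∑ i ∈ range L, ‖a (t - i) - a (t - i - 1)‖ ^ p) := by
  have hbound : ‖a t - a (t - L)‖ ≤ 2 * B := (norm_sub_le _ _).trans (by linarith)
  have hpow_mean : ‖a t - a (t - L)‖ ^ p ≤
      (L : ℝ) ^ (p - 1) * ∑ i ∈ range L, ‖a (t - i) - a (t - i - 1)‖ ^ p :=
    calc ‖a t - a (t - L)‖ ^ p ≤ (∑ i ∈ range L, ‖a (t - i) - a (t - i - 1)‖) ^ p := by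
          gcongr; exact norm_sub_lag_le_sum_norm_sub a t L
      _ ≤ _ := by
          simpa only [card_range] using Real.rpow_sum_le_const_mul_sum_rpow_of_nonneg (range L) hp1
            fun i _ => norm_nonneg (a (t - i) - a (t - i - 1))
  calc ‖a t - a (t - L)‖ ^ (2 : ℝ) ≤ (2 * B) ^ (2 - p) * ‖a t - a (t - L)‖ ^ p :=
        rpow_two_le_rpow_sub_mul_rpow (norm_nonneg _) hbound (by linarith) hp2
    _ ≤ _ := mul_le_mul_of_nonneg_left hpow_mean
        (Real.rpow_nonneg ((norm_nonneg _).trans hbound) _)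

theorem sum_norm_sub_lag_rpow_two_le (hp1 : 1 ≤ p) (hp2 : p ≤ 2) (hB : 0 ≤ B) {V : ℝ} {n L : ℕ}
    (hvar : ∑ t ∈ Icc 2 n, ‖a t - a (t - 1)‖ ^ p ≤ V ^ p)
    (hbd : ∀ t, 1 ≤ t → t ≤ n → ‖a t‖ ≤ B) :
    ∑ t ∈ Icc (L + 1) n, ‖a t - a (t - L)‖ ^ (2 : ℝ) ≤ (2 * B) ^ (2 - p) * (L : ℝ) ^ p * V ^ p := by
  have hC : 0 ≤ (2 * B) ^ (2 - p) := Real.rpow_nonneg (by linarith) _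
  calc ∑ t ∈ Icc (L + 1) n, ‖a t - a (t - L)‖ ^ (2 : ℝ)
      ≤ ∑ t ∈ Icc (L + 1) n, (2 * B) ^ (2 - p) *
          ((L : ℝ) ^ (p - 1) * ∑ i ∈ range L, ‖a (t - i) - a (t - i - 1)‖ ^ p) := by
        refine sum_le_sum fun t ht => ?_
        rw [mem_Icc] at ht
        exact norm_sub_lag_rpow_two_le hp1 hp2 (hbd t (by omega) ht.2) (hbd _ (by omega) (by omega))
    _ = (2 * B) ^ (2 - p) * ((L : ℝ) ^ (p - 1) *
          ∑ i ∈ range L, ∑ t ∈ Icc (L + 1) n, ‖a (t - i) - a (t - i - 1)‖ ^ p) := by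
        rw [← mul_sum, ← mul_sum, sum_comm]
    _ ≤ (2 * B) ^ (2 - p) * ((L : ℝ) ^ (p - 1) * ∑ _i ∈ range L, V ^ p) := by
        gcongr with i hi
        exact (sum_Icc_comp_sub_le_sum_Icc (fun s => by positivity) (mem_range.1 hi)).trans hvar
    _ = (2 * B) ^ (2 - p) * (L : ℝ) ^ p * V ^ p := by
        rw [sum_const, card_range, nsmul_eq_mul, ← mul_assoc _ (L : ℝ),
          ← Real.rpow_add_one' (Nat.cast_nonneg L) (by linarith), sub_add_cancel, mul_assoc]

end LagBound

theorem stmt_5_general {E : Type*} [NormedAddCommGroup E]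
    (p V B : ℝ) (hp1 : 1 ≤ p) (hp2 : p ≤ 2) (hB : 0 ≤ B)
    (n L : ℕ) (a : ℕ → E)
    (hvar : ∑ t ∈ Finset.Icc 2 n, ‖a t - a (t - 1)‖ ^ p ≤ V ^ p)
    (hbd : ∀ t, 1 ≤ t → t ≤ n → ‖a t‖ ≤ B) :
    (1 / (n : ℝ)) * ∑ t ∈ Finset.Icc (L + 1) n, ‖a t - a (t - L)‖ ^ (2 : ℝ)
      ≤ (2 * B) ^ (2 - p) * (L : ℝ) ^ p * V ^ p / n := by
  rw [one_div_mul_eq_div]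
  gcongr
  exact sum_norm_sub_lag_rpow_two_le hp1 hp2 hB hvar hbd

/-- Deterministic lag-`L` bias bound, case `p ∈ [1,2]`: if the increments of a bounded
sequence have `p`-variation sum at most `V^p`, then
`(1/n) ∑_{t=L+1}^n ‖a_t − a_{t−L}‖² ≤ (2B)^{2−p} L^p V^p / n`. -/
theorem stmt_5 {E : Type*} [NormedAddCommGroup E] [NormedSpace ℝ E]
    (p V B : ℝ) (hp1 : 1 ≤ p) (hp2 : p ≤ 2) (hV : 0 ≤ V) (hB : 0 ≤ B)
    (n L : ℕ) (hL1 : 1 ≤ L) (hLn : L < n) (a : ℕ → E)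
    (hvar : ∑ t ∈ Finset.Icc 2 n, ‖a t - a (t - 1)‖ ^ p ≤ V ^ p)
    (hbd : ∀ t, 1 ≤ t → t ≤ n → ‖a t‖ ≤ B) :
    (1 / (n : ℝ)) * ∑ t ∈ Finset.Icc (L + 1) n, ‖a t - a (t - L)‖ ^ (2 : ℝ)
      ≤ (2 * B) ^ (2 - p) * (L : ℝ) ^ p * V ^ p / n :=
  stmt_5_general p V B hp1 hp2 hB n L a hvar hbd
end

section
/- Let (a_t)_{t=0}^n be a finite sequence in a normed space with ∑_{t=1}^n ‖a_t − a_{t−1}‖^p ≤ V^p for some p > 2. Then for any lag L with 1 ≤ L ≤ n, (1/n) ∑_{t=L}^n ‖a_t − a_{t−L}‖^2 ≤ L^2 · n^{−2/p} · V^2. -/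
/-!
Write `d j = ‖a j - a (j - 1)‖`. By the triangle inequality `‖a t - a (t - L)‖` is at most the
sum of the `L` increments `d j` in the window `t - L < j ≤ t`, so by Cauchy–Schwarz its square is
at most `L ∑_{window} d j ^ 2`. Each `j` lies in at most `L` windows, hence the lag-`L` sum of
squares is at most `L² ∑_{j ≤ n} d j ^ 2`. Finally Hölder with exponents `p/2` and `p/(p-2)` gives
`∑ d j ^ 2 ≤ n ^ (1 - 2/p) (∑ d j ^ p) ^ (2/p) ≤ n ^ (1 - 2/p) V²`.
-/

open Finset

theorem sum_sum_Ioc_sub_le (f : ℕ → ℝ) (hf : ∀ j, 0 ≤ f j) (L n : ℕ) :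
    ∑ t ∈ Icc L n, ∑ j ∈ Ioc (t - L) t, f j ≤ L * ∑ j ∈ Icc 1 n, f j := by
  rw [sum_comm' (t' := Icc 1 n) (s' := fun j => Icc L n ∩ Ico j (j + L))
    (fun t j => by simp only [mem_Icc, mem_Ioc, mem_inter, mem_Ico]; omega), mul_sum]
  gcongr with j
  rw [sum_const, nsmul_eq_mul]
  gcongr
  · exact hf j
  · calc #(Icc L n ∩ Ico j (j + L)) ≤ #(Ico j (j + L)) := card_le_card inter_subset_right
      _ = L := by simp

theorem Real.sum_rpow_le_card_rpow_mul_sum_rpow {ι : Type*} (s : Finset ι) {x : ι → ℝ}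
    (hx : ∀ i, 0 ≤ x i) {q p : ℝ} (hq : 0 < q) (hqp : q ≤ p) :
    ∑ i ∈ s, x i ^ q ≤ (#s : ℝ) ^ (1 - q / p) * (∑ i ∈ s, x i ^ p) ^ (q / p) := by
  have := inner_le_weight_mul_Lp_of_nonneg s ((one_le_div hq).2 hqp) (fun _ => 1)
    (fun i => x i ^ q) (fun _ => zero_le_one) (fun i => Real.rpow_nonneg (hx i) q)
  simp only [one_mul, sum_const, nsmul_eq_mul, mul_one, inv_div] at this
  convert this using 4 with i
  rw [← Real.rpow_mul (hx i), mul_div_cancel₀ p hq.ne']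

section Increments

variable {E : Type*} [SeminormedAddCommGroup E] (a : ℕ → E)

theorem norm_sub_le_sum_Ioc_norm_sub {m t : ℕ} (hmt : m ≤ t) :
    ‖a t - a m‖ ≤ ∑ j ∈ Ioc m t, ‖a j - a (j - 1)‖ := by
  induction t, hmt using Nat.le_induction with
  | base => simp
  | succ t hmt ih =>
    rw [sum_Ioc_succ_top hmt, Nat.add_sub_cancel]
    calc ‖a (t + 1) - a m‖ ≤ ‖a t - a m‖ + ‖a (t + 1) - a t‖ :=
          (norm_sub_le_norm_sub_add_norm_sub _ _ _).trans_eq (add_comm _ _)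
      _ ≤ _ := by gcongr

theorem sq_norm_sub_le_mul_sum_sq {m t : ℕ} (hmt : m ≤ t) :
    ‖a t - a m‖ ^ 2 ≤ ((t - m : ℕ) : ℝ) * ∑ j ∈ Ioc m t, ‖a j - a (j - 1)‖ ^ 2 := by
  calc ‖a t - a m‖ ^ 2 ≤ (∑ j ∈ Ioc m t, ‖a j - a (j - 1)‖) ^ 2 := by
        gcongr; exact norm_sub_le_sum_Ioc_norm_sub a hmt
    _ ≤ #(Ioc m t) * ∑ j ∈ Ioc m t, ‖a j - a (j - 1)‖ ^ 2 := sq_sum_le_card_mul_sum_sq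
    _ = _ := by rw [Nat.card_Ioc]

theorem sum_sq_norm_sub_lag_le (L n : ℕ) :
    ∑ t ∈ Icc L n, ‖a t - a (t - L)‖ ^ 2 ≤ (L : ℝ) ^ 2 * ∑ j ∈ Icc 1 n, ‖a j - a (j - 1)‖ ^ 2 :=
  calc ∑ t ∈ Icc L n, ‖a t - a (t - L)‖ ^ 2
      ≤ ∑ t ∈ Icc L n, L * ∑ j ∈ Ioc (t - L) t, ‖a j - a (j - 1)‖ ^ 2 := by
        refine sum_le_sum fun t ht => ?_
        have := sq_norm_sub_le_mul_sum_sq a (Nat.sub_le t L)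
        rwa [Nat.sub_sub_self (mem_Icc.1 ht).1] at this
    _ ≤ L * (L * ∑ j ∈ Icc 1 n, ‖a j - a (j - 1)‖ ^ 2) := by
        rw [← mul_sum]; gcongr; exact sum_sum_Ioc_sub_le _ (fun _ => sq_nonneg _) L n
    _ = _ := by ring

end Increments

theorem stmt_6_general {E : Type*} [NormedAddCommGroup E]
    (p V : ℝ) (hp : 2 < p) (hV : 0 ≤ V)
    (n L : ℕ) (a : ℕ → E)
    (hvar : ∑ t ∈ Finset.Icc 1 n, ‖a t - a (t - 1)‖ ^ p ≤ V ^ p) :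
    (1 / (n : ℝ)) * ∑ t ∈ Finset.Icc L n, ‖a t - a (t - L)‖ ^ (2 : ℝ)
      ≤ (L : ℝ) ^ (2 : ℝ) * (n : ℝ) ^ (-(2 / p)) * V ^ (2 : ℝ) := by
  have hholder : ∑ j ∈ Icc 1 n, ‖a j - a (j - 1)‖ ^ 2 ≤ (n : ℝ) ^ (1 - 2 / p) * V ^ (2 : ℝ) :=
    calc ∑ j ∈ Icc 1 n, ‖a j - a (j - 1)‖ ^ 2 = ∑ j ∈ Icc 1 n, ‖a j - a (j - 1)‖ ^ (2 : ℝ) := by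
          simp only [Real.rpow_two]
      _ ≤ (#(Icc 1 n) : ℝ) ^ (1 - 2 / p) * (∑ j ∈ Icc 1 n, ‖a j - a (j - 1)‖ ^ p) ^ (2 / p) :=
        Real.sum_rpow_le_card_rpow_mul_sum_rpow _ (fun _ => norm_nonneg _) two_pos hp.le
      _ ≤ (n : ℝ) ^ (1 - 2 / p) * (V ^ p) ^ (2 / p) := by
        rw [Nat.card_Icc, Nat.add_sub_cancel]; gcongr
      _ = (n : ℝ) ^ (1 - 2 / p) * V ^ (2 : ℝ) := by
        rw [← Real.rpow_mul hV, mul_div_cancel₀ _ (by positivity)]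
  have hsplit : (n : ℝ) ^ (1 - 2 / p) = n * (n : ℝ) ^ (-(2 / p)) := by
    have : 1 + -(2 / p) ≠ 0 := by linarith [(div_lt_one (by linarith)).2 hp]
    rw [sub_eq_add_neg, Real.rpow_add' n.cast_nonneg this, Real.rpow_one]
  calc (1 / (n : ℝ)) * ∑ t ∈ Icc L n, ‖a t - a (t - L)‖ ^ (2 : ℝ)
      ≤ (1 / (n : ℝ)) * ((L : ℝ) ^ 2 * ((n : ℝ) ^ (1 - 2 / p) * V ^ (2 : ℝ))) := by
        simp only [Real.rpow_two] at hholder ⊢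
        gcongr
        exact (sum_sq_norm_sub_lag_le a L n).trans (by gcongr)
    _ = (1 / (n : ℝ)) * (n * ((L : ℝ) ^ (2 : ℝ) * (n : ℝ) ^ (-(2 / p)) * V ^ (2 : ℝ))) := by
        rw [hsplit, Real.rpow_two (L : ℝ)]; ring
    _ ≤ _ := by rw [one_div]; exact inv_mul_left_le (by positivity)

/-- Deterministic lag-`L` bias bound, case `p > 2`: if the increments of a sequence have
`p`-variation sum at most `V^p`, then `(1/n) ∑_{t=L}^n ‖a_t − a_{t−L}‖² ≤ L² n^{−2/p} V²`. -/
theorem stmt_6 {E : Type*} [NormedAddCommGroup E] [NormedSpace ℝ E]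
    (p V : ℝ) (hp : 2 < p) (hV : 0 ≤ V)
    (n L : ℕ) (hL1 : 1 ≤ L) (hLn : L ≤ n) (a : ℕ → E)
    (hvar : ∑ t ∈ Finset.Icc 1 n, ‖a t - a (t - 1)‖ ^ p ≤ V ^ p) :
    (1 / (n : ℝ)) * ∑ t ∈ Finset.Icc L n, ‖a t - a (t - L)‖ ^ (2 : ℝ)
      ≤ (L : ℝ) ^ (2 : ℝ) * (n : ℝ) ^ (-(2 / p)) * V ^ (2 : ℝ) :=
  stmt_6_general p V hp hV n L a hvar
end

section
/- Let A_i ∈ ℝ^{d×d}, i ∈ ℕ, be matrices with ‖A_i‖ ≤ A* < ∞ (operator norm), spectral radius ρ(A_i) ≤ ρ_0 < 1 for all i, and sequence p-variation sup over increasing index sequences 1 ≤ i_1 < i_2 < … of (∑_k ‖A_{i_{k+1}} − A_{i_k}‖^p)^{1/p} ≤ A* for some p ≥ 1. Then for every ρ ∈ (ρ_0, 1) there exists a constant K = K(ρ, ρ_0, A*) such that ‖∏_{i=s+1}^t A_i‖ ≤ K ρ^{t−s} for all integers 0 ≤ s < t, where the product is taken in order A_{s+1} A_{s+2} ⋯ A_t.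 -/
/-!
Bounded `p`-variation forces the sequence `Aᵢ` to be Cauchy, so it converges to some `L`.
Eigenvalues depend continuously on the matrix (through the characteristic polynomial), so the
spectral radius of `L` is still at most `ρ₀ < ρ`, and Gelfand's formula gives `N > 0` with
`‖L ^ N‖ < ρ ^ N`. Products of `N` consecutive `Aᵢ` converge to `L ^ N`, hence have norm at most
`ρ ^ N` from some index on; cutting a product into such blocks gives the geometric decay, and the
finitely many early factors only change the constant.
-/

open Matrix Finset

/-- Euclidean operator norm of a real square matrix. -/
noncomputable def matOpNorm {d : ℕ} (A : Matrix (Fin d) (Fin d) ℝ) : ℝ :=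
  ‖Matrix.toEuclideanCLM (𝕜 := ℝ) A‖

/-- Spectral radius of a real square matrix: the maximal modulus of its complex eigenvalues. -/
noncomputable def specRad {d : ℕ} (A : Matrix (Fin d) (Fin d) ℝ) : ℝ :=
  ⨆ z ∈ spectrum ℂ (A.map (algebraMap ℝ ℂ)), ‖z‖

/-- The ordered product `A_{s+1} A_{s+2} ⋯ A_t`. -/
noncomputable def matProd {d : ℕ} (A : ℕ → Matrix (Fin d) (Fin d) ℝ) (s t : ℕ) :
    Matrix (Fin d) (Fin d) ℝ :=
  ((List.range (t - s)).map (fun k => A (s + 1 + k))).prod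

open Filter Topology

section OrderedProd

variable {R : Type*}

def orderedProd [Monoid R] (f : ℕ → R) (s n : ℕ) : R :=
  ((List.range n).map fun k => f (s + k)).prod

lemma orderedProd_add [Monoid R] (f : ℕ → R) (s m n : ℕ) :
    orderedProd f s (m + n) = orderedProd f s m * orderedProd f (s + m) n := by
  simp only [orderedProd, List.range_add, List.map_append, List.prod_append, List.map_map,
    Function.comp_def, add_assoc]

lemma orderedProd_succ [Monoid R] (f : ℕ → R) (s n : ℕ) :
    orderedProd f s (n + 1) = orderedProd f s n * f (s + n) :=
  List.prod_range_succ _ n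

lemma tendsto_orderedProd [Monoid R] [TopologicalSpace R] [ContinuousMul R] {f : ℕ → R} {L : R}
    (hf : Tendsto f atTop (𝓝 L)) (n : ℕ) :
    Tendsto (fun s => orderedProd f s n) atTop (𝓝 (L ^ n)) := by
  have := tendsto_list_prod (List.range n) fun k _ => hf.comp (tendsto_add_atTop_nat k)
  simpa [orderedProd, add_comm] using this

variable [NormedRing R] [NormOneClass R] {f : ℕ → R} {C ρ : ℝ}

lemma norm_orderedProd_le_pow (hf : ∀ k, ‖f k‖ ≤ C) (s n : ℕ) :
    ‖orderedProd f s n‖ ≤ C ^ n := by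
  induction n with
  | zero => simp [orderedProd]
  | succ n ih =>
    rw [orderedProd_succ, pow_succ]
    exact (norm_mul_le _ _).trans
      (mul_le_mul ih (hf _) (norm_nonneg _) (pow_nonneg ((norm_nonneg _).trans (hf 0)) n))

lemma norm_orderedProd_le_div_pow_mul_pow (hρ : 0 < ρ) (hf : ∀ k, ‖f k‖ ≤ C) (s n : ℕ) :
    ‖orderedProd f s n‖ ≤ (C / ρ) ^ n * ρ ^ n := by
  rw [← mul_pow, div_mul_cancel₀ _ hρ.ne']
  exact norm_orderedProd_le_pow hf s n

lemma norm_orderedProd_le_of_norm_block_le (hρ : 0 < ρ) (hρC : ρ ≤ C) (hf : ∀ k, ‖f k‖ ≤ C)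
    {N i₀ : ℕ} (hN : 0 < N) (hblock : ∀ u ≥ i₀, ‖orderedProd f u N‖ ≤ ρ ^ N)
    (n : ℕ) {u : ℕ} (hu : i₀ ≤ u) : ‖orderedProd f u n‖ ≤ (C / ρ) ^ N * ρ ^ n := by
  induction n using Nat.strong_induction_on generalizing u with
  | _ n ih =>
    rcases lt_or_ge n N with hnN | hNn
    · calc ‖orderedProd f u n‖ ≤ (C / ρ) ^ n * ρ ^ n :=
            norm_orderedProd_le_div_pow_mul_pow hρ hf u n
        _ ≤ (C / ρ) ^ N * ρ ^ n := by
          gcongr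
          exact (one_le_div hρ).2 hρC
    · obtain ⟨m, rfl⟩ := Nat.exists_eq_add_of_le hNn
      rw [orderedProd_add, pow_add]
      calc ‖orderedProd f u N * orderedProd f (u + N) m‖
          ≤ ρ ^ N * ((C / ρ) ^ N * ρ ^ m) :=
            (norm_mul_le _ _).trans (mul_le_mul (hblock u hu) (ih m (by omega) (by omega))
              (norm_nonneg _) (by positivity))
        _ = (C / ρ) ^ N * (ρ ^ N * ρ ^ m) := by ring

lemma norm_orderedProd_le_of_norm_orderedProd_add_le (hρ : 0 < ρ) (hρC : ρ ≤ C)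
    (hf : ∀ k, ‖f k‖ ≤ C) {K : ℝ} (hK : 1 ≤ K) {s j : ℕ}
    (h : ∀ n, ‖orderedProd f (s + j) n‖ ≤ K * ρ ^ n) (n : ℕ) :
    ‖orderedProd f s n‖ ≤ (C / ρ) ^ j * K * ρ ^ n := by
  have hCρ : 1 ≤ C / ρ := (one_le_div hρ).2 hρC
  rcases le_or_gt n j with hnj | hjn
  · calc ‖orderedProd f s n‖ ≤ (C / ρ) ^ n * ρ ^ n :=
          norm_orderedProd_le_div_pow_mul_pow hρ hf s n
      _ ≤ (C / ρ) ^ j * K * ρ ^ n := by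
        gcongr
        exact (pow_le_pow_right₀ hCρ hnj).trans (le_mul_of_one_le_right (by positivity) hK)
  · obtain ⟨m, rfl⟩ := Nat.exists_eq_add_of_le hjn.le
    rw [orderedProd_add, pow_add]
    calc ‖orderedProd f s j * orderedProd f (s + j) m‖
        ≤ (C / ρ) ^ j * ρ ^ j * (K * ρ ^ m) :=
          (norm_mul_le _ _).trans (mul_le_mul (norm_orderedProd_le_div_pow_mul_pow hρ hf s j)
            (h m) (norm_nonneg _) (by positivity))
      _ = (C / ρ) ^ j * K * (ρ ^ j * ρ ^ m) := by ring

theorem exists_norm_orderedProd_le_of_tendsto {L : R} (hf : Tendsto f atTop (𝓝 L))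
    (hρ : 0 < ρ) {N : ℕ} (hN : 0 < N) (hLN : ‖L ^ N‖ < ρ ^ N) :
    ∃ K, ∀ s n, ‖orderedProd f s n‖ ≤ K * ρ ^ n := by
  obtain ⟨C₀, hC₀⟩ := hf.norm.bddAbove_range
  set C := max C₀ ρ
  have hfC : ∀ k, ‖f k‖ ≤ C := fun k => (hC₀ ⟨k, rfl⟩).trans (le_max_left _ _)
  have hρC : ρ ≤ C := le_max_right _ _
  obtain ⟨i₀, hi₀⟩ := eventually_atTop.1
    ((tendsto_orderedProd hf N).norm.eventually (gt_mem_nhds hLN))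
  refine ⟨(C / ρ) ^ i₀ * (C / ρ) ^ N, fun s n => ?_⟩
  exact norm_orderedProd_le_of_norm_orderedProd_add_le hρ hρC hfC
    (one_le_pow₀ ((one_le_div hρ).2 hρC))
    (fun n => norm_orderedProd_le_of_norm_block_le hρ hρC hfC hN (fun u hu => (hi₀ u hu).le) n
      (Nat.le_add_left i₀ s)) n

end OrderedProd

lemma cauchySeq_of_sum_rpow_dist_le {X : Type*} [PseudoMetricSpace X] {x : ℕ → X} {p C : ℝ}
    (hp : 0 ≤ p)
    (h : ∀ idx : ℕ → ℕ, StrictMono idx → (∀ k, 1 ≤ idx k) → ∀ m,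
      ∑ k ∈ range m, dist (x (idx (k + 1))) (x (idx k)) ^ p ≤ C) :
    CauchySeq x := by
  rw [Metric.cauchySeq_iff']
  by_contra! hx
  obtain ⟨ε, hε, hjump⟩ := hx
  choose next hnext_ge hnext using hjump
  have hlt : ∀ N, N < next N := fun N => (hnext_ge N).lt_of_ne fun hN => by
    have := hnext N
    rw [← hN, dist_self] at this
    exact this.not_gt hε
  set idx := fun k => next^[k] 1
  have hstep : ∀ k, idx (k + 1) = next (idx k) := fun k => Function.iterate_succ_apply' next k 1
  have hmono : StrictMono idx := strictMono_nat_of_lt_succ fun k => hstep k ▸ hlt _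
  obtain ⟨m, hm⟩ := exists_nat_gt (C / ε ^ p)
  have hεp : 0 < ε ^ p := Real.rpow_pos_of_pos hε p
  have : m * ε ^ p ≤ C := calc
    m * ε ^ p = ∑ _k ∈ range m, ε ^ p := by simp
    _ ≤ ∑ k ∈ range m, dist (x (idx (k + 1))) (x (idx k)) ^ p :=
      sum_le_sum fun k _ => Real.rpow_le_rpow hε.le (hstep k ▸ hnext (idx k)) hp
    _ ≤ C := h idx hmono (fun k => hmono.monotone (Nat.zero_le k)) m
  rw [div_lt_iff₀ hεp] at hm
  linarith

section Spectrum

variable {n : Type*} [Fintype n] [DecidableEq n]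

lemma pow_card_le_norm_det_sub {B : Matrix n n ℂ} {r : ℝ} (hB : ∀ w ∈ spectrum ℂ B, ‖w‖ ≤ r)
    {z : ℂ} (hz : r ≤ ‖z‖) : (‖z‖ - r) ^ Fintype.card n ≤ ‖(scalar n z - B).det‖ := by
  rw [← eval_charpoly, (IsAlgClosed.splits _).eval_eq_prod_roots_of_monic B.charpoly_monic]
  refine le_of_le_of_eq ?_ (map_multiset_prod (normHom : ℂ →*₀ ℝ) _).symm
  rw [Multiset.map_map]
  calc (‖z‖ - r) ^ Fintype.card n = (B.charpoly.roots.map fun _ => ‖z‖ - r).prod := by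
        rw [Multiset.map_const', Multiset.prod_replicate, IsAlgClosed.card_roots_eq_natDegree,
          charpoly_natDegree_eq_dim]
    _ ≤ _ := by
      refine Multiset.prod_map_le_prod_map₀ _ _ (fun _ _ => sub_nonneg.2 hz) fun w hw => ?_
      have hw : w ∈ spectrum ℂ B :=
        mem_spectrum_iff_isRoot_charpoly.2 (Polynomial.isRoot_of_mem_roots hw)
      calc ‖z‖ - r ≤ ‖z‖ - ‖w‖ := sub_le_sub_left (hB w hw) _
        _ ≤ ‖z - w‖ := norm_sub_norm_le z w

lemma norm_le_of_tendsto_of_mem_spectrum {ι : Type*} {l : Filter ι} [l.NeBot]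
    {B : ι → Matrix n n ℂ} {C : Matrix n n ℂ} (hB : Tendsto B l (𝓝 C)) {r : ℝ}
    (hr : ∀ i, ∀ w ∈ spectrum ℂ (B i), ‖w‖ ≤ r) {z : ℂ} (hz : z ∈ spectrum ℂ C) : ‖z‖ ≤ r := by
  by_contra! hlt
  have hdet : Tendsto (fun i => ‖(scalar n z - B i).det‖) l (𝓝 ‖(scalar n z - C).det‖) :=
    ((continuous_const.sub continuous_id).matrix_det.norm.tendsto C).comp hB
  have hC : (scalar n z - C).det = 0 := by
    rwa [← eval_charpoly, ← Polynomial.IsRoot.def, ← mem_spectrum_iff_isRoot_charpoly]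
  have := ge_of_tendsto hdet (Eventually.of_forall fun i => pow_card_le_norm_det_sub (hr i) hlt.le)
  rw [hC, norm_zero] at this
  exact this.not_gt (pow_pos (sub_pos.2 hlt) _)

lemma tendsto_of_tendsto_toEuclideanCLM {𝕜 : Type*} [RCLike 𝕜] {ι : Type*} {l : Filter ι}
    {A : ι → Matrix n n 𝕜} {L : EuclideanSpace 𝕜 n →L[𝕜] EuclideanSpace 𝕜 n}
    (h : Tendsto (fun i => toEuclideanCLM (𝕜 := 𝕜) (A i)) l (𝓝 L)) :
    Tendsto A l (𝓝 ((toEuclideanCLM (𝕜 := 𝕜) (n := n)).symm L)) := by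
  have hcont := LinearMap.continuous_of_finiteDimensional
    (toEuclideanCLM (𝕜 := 𝕜) (n := n)).symm.toAlgEquiv.toLinearEquiv.toLinearMap
  simpa [Function.comp_def] using (hcont.tendsto L).comp h

end Spectrum

lemma eventually_norm_pow_lt_of_spectralRadius_lt {A : Type*} [NormedRing A] [NormedAlgebra ℂ A]
    [CompleteSpace A] {a : A} {ρ : ℝ} (h : spectralRadius ℂ a < ENNReal.ofReal ρ) :
    ∀ᶠ n in atTop, ‖a ^ n‖ < ρ ^ n := by
  have hρ : 0 < ρ := ENNReal.ofReal_pos.1 (pos_of_gt h)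
  filter_upwards [(spectrum.pow_norm_pow_one_div_tendsto_nhds_spectralRadius a).eventually
    (gt_mem_nhds h), eventually_gt_atTop 0] with n hn hn0
  rwa [ENNReal.ofReal_lt_ofReal_iff hρ, one_div, Real.rpow_inv_lt_iff_of_pos (norm_nonneg _) hρ.le
    (by positivity), Real.rpow_natCast] at hn

section RealMatrix

variable {d : ℕ}

lemma matOpNorm_le_norm_toEuclideanCLM_map (M : Matrix (Fin d) (Fin d) ℝ) :
    matOpNorm M ≤ ‖toEuclideanCLM (𝕜 := ℂ) (M.map (algebraMap ℝ ℂ))‖ := by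
  let ofReal : EuclideanSpace ℝ (Fin d) → EuclideanSpace ℂ (Fin d) :=
    fun v => WithLp.toLp 2 fun i => (v i : ℂ)
  have hnorm : ∀ v : EuclideanSpace ℝ (Fin d), ‖ofReal v‖ = ‖v‖ := fun v => by
    simp [ofReal, EuclideanSpace.norm_eq, Complex.norm_real]
  have happ : ∀ v : EuclideanSpace ℝ (Fin d),
      toEuclideanCLM (𝕜 := ℂ) (M.map (algebraMap ℝ ℂ)) (ofReal v) =
        ofReal (toEuclideanCLM (𝕜 := ℝ) M v) := fun v => by
    ext i
    simp [ofReal, mulVec, dotProduct]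
  refine ContinuousLinearMap.opNorm_le_bound _ (norm_nonneg _) fun v => ?_
  rw [← hnorm, ← happ, ← hnorm v]
  exact ContinuousLinearMap.le_opNorm _ _

lemma norm_le_specRad (M : Matrix (Fin d) (Fin d) ℝ) {z : ℂ}
    (hz : z ∈ spectrum ℂ (M.map (algebraMap ℝ ℂ))) : ‖z‖ ≤ specRad M := by
  refine le_ciSup₂ (f := fun z (_ : z ∈ spectrum ℂ (M.map (algebraMap ℝ ℂ))) => ‖z‖) ?_ z hz
  refine ((finite_spectrum (M.map (algebraMap ℝ ℂ))).image fun w : ℂ => ‖w‖).bddAbove.mono ?_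
  rintro _ ⟨_, ⟨w, rfl⟩, hw, rfl⟩
  exact ⟨w, hw, rfl⟩

lemma eventually_matOpNorm_pow_lt {M : Matrix (Fin d) (Fin d) ℝ} {ρ₀ ρ : ℝ}
    (hM : ∀ z ∈ spectrum ℂ (M.map (algebraMap ℝ ℂ)), ‖z‖ ≤ ρ₀) (hρ₀ : 0 ≤ ρ₀) (hρ : ρ₀ < ρ) :
    ∀ᶠ n in atTop, matOpNorm (M ^ n) < ρ ^ n := by
  set T := toEuclideanCLM (𝕜 := ℂ) (M.map (algebraMap ℝ ℂ))
  have hT : spectralRadius ℂ T < ENNReal.ofReal ρ := by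
    refine lt_of_le_of_lt ?_ ((ENNReal.ofReal_lt_ofReal_iff (hρ₀.trans_lt hρ)).2 hρ)
    refine iSup₂_le fun z hz => ?_
    rw [← ENNReal.ofReal_coe_nnreal, coe_nnnorm]
    exact ENNReal.ofReal_le_ofReal (hM z (by simpa [T] using hz))
  filter_upwards [eventually_norm_pow_lt_of_spectralRadius_lt hT] with n hn
  calc matOpNorm (M ^ n) ≤ ‖toEuclideanCLM (𝕜 := ℂ) ((M ^ n).map (algebraMap ℝ ℂ))‖ :=
        matOpNorm_le_norm_toEuclideanCLM_map _
    _ = ‖T ^ n‖ := by rw [Matrix.map_pow, map_pow]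
    _ < ρ ^ n := hn

lemma matOpNorm_matProd (A : ℕ → Matrix (Fin d) (Fin d) ℝ) (s t : ℕ) :
    matOpNorm (matProd A s t) =
      ‖orderedProd (fun i => toEuclideanCLM (𝕜 := ℝ) (A i)) (s + 1) (t - s)‖ := by
  rw [matOpNorm, matProd, map_list_prod, List.map_map]
  rfl

end RealMatrix

theorem stmt_7_general {d : ℕ} (p ρ₀ Astar : ℝ) (hp : 1 ≤ p) (h0 : 0 ≤ ρ₀)
    (A : ℕ → Matrix (Fin d) (Fin d) ℝ)
    (hspec : ∀ i, specRad (A i) ≤ ρ₀)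
    (hvar : ∀ idx : ℕ → ℕ, StrictMono idx → (∀ k, 1 ≤ idx k) → ∀ m : ℕ,
      ∑ k ∈ Finset.range m, matOpNorm (A (idx (k + 1)) - A (idx k)) ^ p ≤ Astar ^ p) :
    ∀ ρ : ℝ, ρ₀ < ρ → ρ < 1 →
      ∃ K : ℝ, ∀ s t : ℕ, s < t → matOpNorm (matProd A s t) ≤ K * ρ ^ (t - s) := by
  intro ρ hρ₀ _
  rcases Nat.eq_zero_or_pos d with rfl | hd
  · exact ⟨0, fun s t _ => by simp [matOpNorm, ContinuousLinearMap.opNorm_subsingleton]⟩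
  -- `NormOneClass`, needed for the product bounds, fails on the zero space.
  have : Nonempty (Fin d) := ⟨⟨0, hd⟩⟩
  obtain ⟨L, hL⟩ := cauchySeq_tendsto_of_complete <|
    cauchySeq_of_sum_rpow_dist_le (x := fun i => toEuclideanCLM (𝕜 := ℝ) (A i)) (p := p)
      (by linarith) fun idx hidx hidx₁ m => by
        simpa [matOpNorm, dist_eq_norm, ← map_sub] using hvar idx hidx hidx₁ m
  set M := (toEuclideanCLM (𝕜 := ℝ) (n := Fin d)).symm L
  have hAM : Tendsto (fun i => (A i).map (algebraMap ℝ ℂ)) atTop (𝓝 (M.map (algebraMap ℝ ℂ))) :=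
    ((continuous_id.matrix_map (continuous_algebraMap ℝ ℂ)).tendsto M).comp
      (tendsto_of_tendsto_toEuclideanCLM hL)
  have hMspec : ∀ z ∈ spectrum ℂ (M.map (algebraMap ℝ ℂ)), ‖z‖ ≤ ρ₀ :=
    fun z => norm_le_of_tendsto_of_mem_spectrum hAM
      fun i w hw => (norm_le_specRad (A i) hw).trans (hspec i)
  obtain ⟨N, hLN, hN⟩ :=
    ((eventually_matOpNorm_pow_lt hMspec h0 hρ₀).and (eventually_gt_atTop 0)).exists
  obtain ⟨K, hK⟩ := exists_norm_orderedProd_le_of_tendsto hL (h0.trans_lt hρ₀) hN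
    (by simpa [matOpNorm, M] using hLN)
  exact ⟨K, fun s t _ => (matOpNorm_matProd A s t).trans_le (hK _ _)⟩

/-- Lemma C.8: for uniformly bounded matrices with spectral radii at most `ρ₀ < 1` and
bounded sequence `p`-variation, products decay geometrically: for every `ρ ∈ (ρ₀, 1)` there
is `K` with `‖A_{s+1} ⋯ A_t‖ ≤ K ρ^{t−s}` for all `0 ≤ s < t`. -/
theorem stmt_7 {d : ℕ} (p ρ₀ Astar : ℝ) (hp : 1 ≤ p) (h0 : 0 ≤ ρ₀) (h1 : ρ₀ < 1)
    (A : ℕ → Matrix (Fin d) (Fin d) ℝ)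
    (hbd : ∀ i, matOpNorm (A i) ≤ Astar)
    (hspec : ∀ i, specRad (A i) ≤ ρ₀)
    (hvar : ∀ idx : ℕ → ℕ, StrictMono idx → (∀ k, 1 ≤ idx k) → ∀ m : ℕ,
      ∑ k ∈ Finset.range m, matOpNorm (A (idx (k + 1)) - A (idx k)) ^ p ≤ Astar ^ p) :
    ∀ ρ : ℝ, ρ₀ < ρ → ρ < 1 →
      ∃ K : ℝ, ∀ s t : ℕ, s < t → matOpNorm (matProd A s t) ≤ K * ρ ^ (t - s) :=
  stmt_7_general p ρ₀ Astar hp h0 A hspec hvar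
end

section
/- Let A ∈ ℝ^{d×d} have spectral radius ρ(A) ≤ ρ_0 < 1 and ‖A‖ ≤ A*. Then for every ρ_1 ∈ (ρ_0, 1) there exists a constant C = C(ρ_0, ρ_1, A*) such that ‖A^k‖ ≤ C ρ_1^k for all k ≥ 0, with C uniform over all such matrices A. -/
open Matrix

/-!
Complexify `A`. For `‖z‖ = ρ₁⁻¹` the determinant of `1 - z • A` is `∏ (1 - z λ)` over the
eigenvalues `λ`, so its modulus is at least `(1 - ρ₀ / ρ₁) ^ d`. With Cramer's rule and
`|A i j| ≤ ‖A‖ ≤ A*` this bounds the resolvent `(1 - z • A)⁻¹` on the circle `‖z‖ = ρ₁⁻¹` by a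
constant that depends only on `d`, `ρ₀`, `ρ₁` and `A*`. Inside the circle the resolvent is the
holomorphic function `∑ zᵏ Aᵏ`, so Cauchy's estimate for its Taylor coefficients gives
`‖Aᵏ‖ ≤ C ρ₁ᵏ`.
-/

open Polynomial WithLp
open scoped Matrix.Norms.L2Operator NNReal ENNReal Real Nat

section CauchyEstimate

variable {A : Type*} [NormedRing A] [NormedAlgebra ℂ A] [CompleteSpace A] {a : A}

theorem norm_pow_le_of_norm_inverse_one_sub_smul_le {r : ℝ≥0} (hr₀ : 0 < r)
    (hr : (r : ℝ≥0∞) < (spectralRadius ℂ a)⁻¹) {Q : ℝ}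
    (hQ : ∀ z : ℂ, ‖z‖ = r → ‖Ring.inverse (1 - z • a)‖ ≤ Q) (k : ℕ) :
    ‖a ^ k‖ ≤ Q * (r : ℝ)⁻¹ ^ k := by
  set f : ℂ → A := fun z => Ring.inverse (1 - z • a)
  have hf := (spectrum.differentiableOn_inverse_one_sub_smul hr).hasFPowerSeriesOnBall hr₀
  have hcoeff : (fun k => ContinuousMultilinearMap.mkPiRing ℂ (Fin k) (a ^ k)) =
      cauchyPowerSeries f 0 r :=
    ((spectrum.hasFPowerSeriesOnBall_inverse_one_sub_smul ℂ a).exchange_radius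
      hf).hasFPowerSeriesAt.eq_formalMultilinearSeries hf.hasFPowerSeriesAt
  have hint : ∫ θ in 0..2 * π, ‖f (circleMap 0 r θ)‖ ≤ Q * (2 * π) := by
    refine (le_abs_self _).trans ?_
    simpa [abs_of_pos Real.two_pi_pos] using
      intervalIntegral.norm_integral_le_of_norm_le_const (a := 0) (b := 2 * π)
        (f := fun θ => ‖f (circleMap 0 r θ)‖) (C := Q) fun θ _ => by
          simpa using hQ _ (by simp)
  calc ‖a ^ k‖ = ‖cauchyPowerSeries f 0 r k‖ := by
        rw [← hcoeff, ContinuousMultilinearMap.norm_mkPiRing]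
    _ ≤ ((2 * π)⁻¹ * ∫ θ in 0..2 * π, ‖f (circleMap 0 r θ)‖) * |(r : ℝ)|⁻¹ ^ k :=
        norm_cauchyPowerSeries_le f 0 r k
    _ ≤ Q * (r : ℝ)⁻¹ ^ k := by
        rw [abs_of_nonneg r.coe_nonneg]
        gcongr
        rw [inv_mul_le_iff₀ Real.two_pi_pos]
        linarith

theorem norm_pow_le_of_norm_spectrum_le {ρ₀ ρ₁ Q : ℝ} (ha : ∀ μ ∈ spectrum ℂ a, ‖μ‖ ≤ ρ₀)
    (hρ : ρ₀ < ρ₁) (hρ₁ : 0 < ρ₁)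
    (hQ : ∀ z : ℂ, ‖z‖ = ρ₁⁻¹ → ‖Ring.inverse (1 - z • a)‖ ≤ Q) (k : ℕ) :
    ‖a ^ k‖ ≤ Q * ρ₁ ^ k := by
  have hspec : spectralRadius ℂ a ≤ ENNReal.ofReal ρ₀ := iSup₂_le fun μ hμ => by
    rw [← ENNReal.ofReal_coe_nnreal, coe_nnnorm]
    exact ENNReal.ofReal_le_ofReal (ha μ hμ)
  have hr : ((ρ₁⁻¹).toNNReal : ℝ≥0∞) < (spectralRadius ℂ a)⁻¹ :=
    calc ((ρ₁⁻¹).toNNReal : ℝ≥0∞) = (ENNReal.ofReal ρ₁)⁻¹ := ENNReal.ofReal_inv_of_pos hρ₁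
      _ < (ENNReal.ofReal ρ₀)⁻¹ := ENNReal.inv_lt_inv.2 ((ENNReal.ofReal_lt_ofReal_iff hρ₁).2 hρ)
      _ ≤ (spectralRadius ℂ a)⁻¹ := ENNReal.inv_le_inv.2 hspec
  have hr₁ : ((ρ₁⁻¹).toNNReal : ℝ) = ρ₁⁻¹ := Real.coe_toNNReal _ (inv_nonneg.2 hρ₁.le)
  simpa [hr₁] using norm_pow_le_of_norm_inverse_one_sub_smul_le
    (Real.toNNReal_pos.2 (inv_pos.2 hρ₁)) hr (fun z hz => hQ z (hz.trans hr₁)) k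

end CauchyEstimate

theorem Polynomial.Monic.pow_sub_le_norm_eval {p : ℂ[X]} (hp : p.Monic) {ρ : ℝ}
    (hroots : ∀ μ ∈ p.roots, ‖μ‖ ≤ ρ) {w : ℂ} (hw : ρ ≤ ‖w‖) :
    (‖w‖ - ρ) ^ p.natDegree ≤ ‖p.eval w‖ := by
  have hsplit : p.Splits := IsAlgClosed.splits p
  have heval : ‖p.eval w‖ = (p.roots.map fun μ => ‖w - μ‖).prod := by
    conv_lhs => rw [hsplit.eq_prod_roots_of_monic hp]
    simpa [eval_multiset_prod, Multiset.map_map] using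
      (Multiset.prod_hom (p.roots.map fun μ => w - μ) (normHom (α := ℂ))).symm
  rw [heval, hsplit.natDegree_eq_card_roots, ← Multiset.prod_replicate, ← Multiset.map_const']
  exact Multiset.prod_map_le_prod_map₀ _ _ (fun _ _ => sub_nonneg.2 hw) fun μ hμ =>
    (sub_le_sub_left (hroots μ hμ) _).trans (norm_sub_norm_le w μ)

section L2OpNorm

variable {𝕜 : Type*} [RCLike 𝕜] {m n : Type*} [Fintype m] [Fintype n] [DecidableEq n]

theorem Matrix.norm_apply_le_l2_opNorm (A : Matrix m n 𝕜) (i : m) (j : n) : ‖A i j‖ ≤ ‖A‖ := by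
  have hAj : ‖(toLp 2 (A *ᵥ Pi.single j 1) : EuclideanSpace 𝕜 m)‖ ≤ ‖A‖ := by
    simpa using A.l2_opNorm_mulVec (toLp 2 (Pi.single j 1))
  simpa [mulVec_single] using (PiLp.norm_apply_le _ i).trans hAj

variable [DecidableEq m]

theorem Matrix.l2_opNorm_single_le (i : m) (j : n) (c : 𝕜) :
    ‖(single i j c : Matrix m n 𝕜)‖ ≤ ‖c‖ := by
  rw [l2_opNorm_def]
  refine ContinuousLinearMap.opNorm_le_bound _ (norm_nonneg c) fun x => ?_
  have hx : (single i j c : Matrix m n 𝕜) *ᵥ ofLp x = Pi.single i (c * x j) := single_mulVec ..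
  calc _ = ‖(toLp 2 (Pi.single i (c * x j)) : EuclideanSpace 𝕜 m)‖ := by rw [← hx]; rfl
    _ = ‖c‖ * ‖x j‖ := by simp
    _ ≤ ‖c‖ * ‖x‖ := by gcongr; exact PiLp.norm_apply_le x j

theorem Matrix.l2_opNorm_le_sum_norm_apply (A : Matrix m n 𝕜) : ‖A‖ ≤ ∑ i, ∑ j, ‖A i j‖ := by
  conv_lhs => rw [matrix_eq_sum_single A]
  exact (norm_sum_le _ _).trans <| Finset.sum_le_sum fun i _ =>
    (norm_sum_le _ _).trans <| Finset.sum_le_sum fun j _ => l2_opNorm_single_le i j _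

end L2OpNorm

section Resolvent

variable {n : Type*} [Fintype n] [DecidableEq n]

theorem Matrix.norm_adjugate_apply_le {K : Type*} [NormedField K] {M : Matrix n n K} {c : ℝ}
    (hc : 1 ≤ c) (hM : ∀ i j, ‖M i j‖ ≤ c) (i j : n) :
    ‖M.adjugate i j‖ ≤ (Fintype.card n)! * c ^ Fintype.card n := by
  rw [adjugate_apply, ← nsmul_eq_mul]
  refine det_le (abv := IsAbsoluteValue.toAbsoluteValue (norm : K → ℝ)) fun k l => ?_
  rw [updateRow_apply]
  split_ifs
  · rw [Pi.single_apply]; split_ifs <;> simp [hc, zero_le_one.trans hc]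
  · exact hM k l

theorem Matrix.l2_opNorm_inv_le {𝕜 : Type*} [RCLike 𝕜] {M : Matrix n n 𝕜} {c δ : ℝ}
    (hc : 1 ≤ c) (hM : ∀ i j, ‖M i j‖ ≤ c) (hδ : 0 < δ) (hdet : δ ≤ ‖M.det‖) :
    ‖M⁻¹‖ ≤ Fintype.card n ^ 2 * (Fintype.card n)! * c ^ Fintype.card n / δ := by
  have hadj : ‖M.adjugate‖ ≤ Fintype.card n ^ 2 * (Fintype.card n)! * c ^ Fintype.card n :=
    calc ‖M.adjugate‖ ≤ ∑ i, ∑ j, ‖M.adjugate i j‖ := l2_opNorm_le_sum_norm_apply _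
      _ ≤ ∑ _i : n, ∑ _j : n, ((Fintype.card n)! * c ^ Fintype.card n : ℝ) := by
        gcongr with i _ j _; exact norm_adjugate_apply_le hc hM i j
      _ = _ := by simp only [Finset.sum_const, Finset.card_univ, nsmul_eq_mul]; ring
  rw [inv_def, Ring.inverse_eq_inv, div_eq_inv_mul]
  refine (norm_smul_le _ _).trans ?_
  rw [norm_inv]
  gcongr

theorem Matrix.pow_le_norm_det_one_sub_smul (B : Matrix n n ℂ) {ρ : ℝ}
    (hB : ∀ μ ∈ spectrum ℂ B, ‖μ‖ ≤ ρ) {z : ℂ} (hz : ρ * ‖z‖ ≤ 1) :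
    (1 - ρ * ‖z‖) ^ Fintype.card n ≤ ‖(1 - z • B).det‖ := by
  rcases eq_or_ne z 0 with rfl | hz₀
  · simp
  have hroots : ∀ μ ∈ B.charpoly.roots, ‖μ‖ ≤ ρ := fun μ hμ =>
    hB μ (mem_spectrum_of_isRoot_charpoly (isRoot_of_mem_roots hμ))
  have hw : ρ ≤ ‖z⁻¹‖ := by rwa [norm_inv, ← one_div, le_div_iff₀ (norm_pos_iff.2 hz₀)]
  have hdet : (1 - z • B).det = z ^ Fintype.card n * B.charpoly.eval z⁻¹ := by
    rw [eval_charpoly, ← det_smul, smul_sub, scalar_apply, ← smul_one_eq_diagonal, smul_smul,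
      mul_inv_cancel₀ hz₀, one_smul]
  have hbound := (charpoly_monic B).pow_sub_le_norm_eval hroots hw
  rw [charpoly_natDegree_eq_dim] at hbound
  calc (1 - ρ * ‖z‖) ^ Fintype.card n
      = ‖z‖ ^ Fintype.card n * (‖z⁻¹‖ - ρ) ^ Fintype.card n := by
        rw [← mul_pow, norm_inv, mul_sub, mul_inv_cancel₀ (norm_ne_zero_iff.2 hz₀), mul_comm]
    _ ≤ ‖(1 - z • B).det‖ := by
        rw [hdet, norm_mul, norm_pow]
        gcongr

theorem Matrix.norm_inverse_one_sub_smul_le {B : Matrix n n ℂ} {ρ a : ℝ}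
    (hB : ∀ μ ∈ spectrum ℂ B, ‖μ‖ ≤ ρ) (hBa : ∀ i j, ‖B i j‖ ≤ a) (ha : 0 ≤ a) {z : ℂ}
    (hz : ρ * ‖z‖ < 1) :
    ‖Ring.inverse (1 - z • B)‖ ≤ Fintype.card n ^ 2 * (Fintype.card n)! *
      (1 + ‖z‖ * a) ^ Fintype.card n / (1 - ρ * ‖z‖) ^ Fintype.card n := by
  have hentries : ∀ i j, ‖(1 - z • B) i j‖ ≤ 1 + ‖z‖ * a := fun i j => by
    have hone : ‖(1 : Matrix n n ℂ) i j‖ ≤ 1 := by rw [one_apply]; split_ifs <;> simp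
    calc ‖(1 - z • B) i j‖ ≤ ‖(1 : Matrix n n ℂ) i j‖ + ‖z‖ * ‖B i j‖ := by
          simpa only [sub_apply, smul_apply, smul_eq_mul, norm_mul] using
            norm_sub_le ((1 : Matrix n n ℂ) i j) (z * B i j)
      _ ≤ 1 + ‖z‖ * a := add_le_add hone (mul_le_mul_of_nonneg_left (hBa i j) (norm_nonneg z))
  rw [← nonsing_inv_eq_ringInverse]
  exact l2_opNorm_inv_le (le_add_of_nonneg_right (by positivity)) hentries
    (pow_pos (sub_pos.2 hz) _) (pow_le_norm_det_one_sub_smul B hB hz.le)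

theorem Matrix.exists_norm_pow_le_mul_pow {ρ₀ ρ₁ a : ℝ} (hρ₀ : 0 ≤ ρ₀) (hρ : ρ₀ < ρ₁)
    (ha : 0 ≤ a) :
    ∃ C, 0 ≤ C ∧ ∀ B : Matrix n n ℂ, (∀ μ ∈ spectrum ℂ B, ‖μ‖ ≤ ρ₀) → (∀ i j, ‖B i j‖ ≤ a) →
      ∀ k : ℕ, ‖B ^ k‖ ≤ C * ρ₁ ^ k := by
  have hρ₁ : 0 < ρ₁ := hρ₀.trans_lt hρ
  have hδ : 0 < 1 - ρ₀ * ρ₁⁻¹ := by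
    rw [sub_pos, ← div_eq_mul_inv, div_lt_one hρ₁]; exact hρ
  refine ⟨Fintype.card n ^ 2 * (Fintype.card n)! * (1 + ρ₁⁻¹ * a) ^ Fintype.card n /
    (1 - ρ₀ * ρ₁⁻¹) ^ Fintype.card n, by positivity, fun B hB hBa k => ?_⟩
  refine norm_pow_le_of_norm_spectrum_le hB hρ hρ₁ (fun z hz => ?_) k
  rw [← hz] at hδ ⊢
  exact norm_inverse_one_sub_smul_le hB hBa ha (sub_pos.1 hδ)

end Resolvent

theorem norm_le_specRad_s8 {d : ℕ} (A : Matrix (Fin d) (Fin d) ℝ) {μ : ℂ}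
    (hμ : μ ∈ spectrum ℂ (A.map (algebraMap ℝ ℂ))) : ‖μ‖ ≤ specRad A := by
  obtain ⟨R, hR⟩ := ((A.map (algebraMap ℝ ℂ)).finite_spectrum.image (‖·‖)).bddAbove
  have hbdd : BddAbove (Set.range fun z => ⨆ _ : z ∈ spectrum ℂ (A.map (algebraMap ℝ ℂ)), ‖z‖) :=
    ⟨max R 0, Set.forall_mem_range.2 fun z => Real.iSup_le
      (fun hz => (hR ⟨z, hz, rfl⟩).trans (le_max_left _ _)) (le_max_right _ _)⟩
  exact le_ciSup_of_le hbdd μ (ciSup_pos (f := fun _ => ‖μ‖) hμ).ge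

theorem stmt_8_general {d : ℕ} (ρ₀ ρ₁ Astar : ℝ) (h0 : 0 ≤ ρ₀) (h01 : ρ₀ < ρ₁)
    (hA : 0 ≤ Astar) :
    ∃ C : ℝ, 0 < C ∧ ∀ A : Matrix (Fin d) (Fin d) ℝ,
      specRad A ≤ ρ₀ → matOpNorm A ≤ Astar →
      ∀ k : ℕ, matOpNorm (A ^ k) ≤ C * ρ₁ ^ k := by
  obtain ⟨C, hC, hpow⟩ := exists_norm_pow_le_mul_pow (n := Fin d) h0 h01 hA
  have hρ₁ : 0 < ρ₁ := h0.trans_lt h01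
  refine ⟨d ^ 2 * C + 1, by positivity, fun A hspec hnorm k => ?_⟩
  set B := A.map (algebraMap ℝ ℂ)
  have hB : ∀ μ ∈ spectrum ℂ B, ‖μ‖ ≤ ρ₀ := fun μ hμ => (norm_le_specRad_s8 A hμ).trans hspec
  have hBa : ∀ i j, ‖B i j‖ ≤ Astar := fun i j => by
    simpa [B] using (norm_apply_le_l2_opNorm A i j).trans hnorm
  have hBk : B ^ k = (A ^ k).map (algebraMap ℝ ℂ) :=
    (map_pow (algebraMap ℝ ℂ).mapMatrix A k).symm
  calc matOpNorm (A ^ k) ≤ ∑ i, ∑ j, ‖(A ^ k) i j‖ := l2_opNorm_le_sum_norm_apply _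
    _ = ∑ i, ∑ j, ‖(B ^ k) i j‖ := by simp [hBk]
    _ ≤ ∑ _i : Fin d, ∑ _j : Fin d, ‖B ^ k‖ := by gcongr; exact norm_apply_le_l2_opNorm _ _ _
    _ = d ^ 2 * ‖B ^ k‖ := by
        simp only [Finset.sum_const, Finset.card_univ, Fintype.card_fin, nsmul_eq_mul]; ring
    _ ≤ d ^ 2 * (C * ρ₁ ^ k) := by gcongr; exact hpow B hB hBa k
    _ ≤ (d ^ 2 * C + 1) * ρ₁ ^ k := by rw [← mul_assoc]; gcongr; linarith

/-- Uniform power decay: if `ρ(A) ≤ ρ₀ < ρ₁ < 1` and `‖A‖ ≤ A*`, then `‖A^k‖ ≤ C ρ₁^k` with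
`C = C(ρ₀, ρ₁, A*)` uniform over all such matrices. -/
theorem stmt_8 {d : ℕ} (ρ₀ ρ₁ Astar : ℝ) (h0 : 0 ≤ ρ₀) (h01 : ρ₀ < ρ₁) (h11 : ρ₁ < 1)
    (hA : 0 ≤ Astar) :
    ∃ C : ℝ, 0 < C ∧ ∀ A : Matrix (Fin d) (Fin d) ℝ,
      specRad A ≤ ρ₀ → matOpNorm A ≤ Astar →
      ∀ k : ℕ, matOpNorm (A ^ k) ≤ C * ρ₁ ^ k :=
  stmt_8_general ρ₀ ρ₁ Astar h0 h01 hA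
end

section
/- Let (ε_i)_{i∈ℤ} be iid random variables and G : ℝ^∞ → ℝ^d measurable with ‖G(𝛆_0)‖_{L_q} < ∞ for some q ≥ 1, where 𝛆_t = (ε_t, ε_{t−1}, …). Let (ε*_i) be an independent iid copy, and define 𝛆*_{0,j} = (ε_0, …, ε_{−j+1}, ε*_{−j}, ε*_{−j−1}, …) (all coordinates beyond lag j replaced) and the single-coordinate replacement 𝛆̃_{0,j} = (ε_0, …, ε_{−j+1}, ε*_{−j}, ε_{−j−1}, …). Then ‖G(𝛆_0) − G(𝛆*_{0,j})‖_{L_q} ≤ ∑_{s=0}^∞ ‖G(𝛆_0) − G(𝛆̃_{0,j+s})‖_{L_q}. -/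
/-!
Let `Z_m` be `𝛆_0` with the lags in `[j, j + m)` taken from the copy. Then
`G(𝛆_0) - G(𝛆*_{0,j}) = ∑_{s<m} (G(Z_s) - G(Z_{s+1})) + (G(Z_m) - G(𝛆*_{0,j}))`.
The law of the iid family is invariant under exchanging `ε_{-k}` with `ε*_{-k}` for all `k` in
any set of lags; exchanging on `[j, j + s)`, resp. `[j, j + m)`, shows that the `s`-th summand has
the `L^q` norm of `G(𝛆_0) - G(𝛆̃_{0,j+s})` and the remainder that of `G(𝛆_0) - G(𝛆*_{0,j+m})`. The latter tends
to `0`: `G` is `L^q`-close to a function of finitely many coordinates, and such a function does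
not see the replacement of distant lags.
-/

open MeasureTheory ProbabilityTheory Filter Topology
open scoped ENNReal symmDiff

theorem ProbabilityTheory.iIndepFun.measurePreserving_comp_right {ι Ω α : Type*}
    [MeasurableSpace Ω] [MeasurableSpace α] {P : Measure Ω} [IsProbabilityMeasure P]
    {X : ι → Ω → α} (hX : ∀ i, Measurable (X i)) (hindep : iIndepFun X P)
    (hid : ∀ i j, IdentDistrib (X i) (X j) P P) {π : ι → ι} (hπ : π.Injective) :
    MeasurePreserving (fun x : ι → α => x ∘ π) (P.map fun ω i => X i ω)
      (P.map fun ω i => X i ω) := by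
  have hπ_meas : Measurable (fun x : ι → α => x ∘ π) :=
    measurable_pi_lambda _ fun i => measurable_pi_apply _
  refine ⟨hπ_meas, ?_⟩
  rw [Measure.map_map hπ_meas (measurable_pi_lambda _ hX)]
  change P.map (fun ω i => X (π i) ω) = _
  rw [(hindep.precomp hπ).map_fun_eq_infinitePi_map (fun i => hX _),
    hindep.map_fun_eq_infinitePi_map hX]
  simp only [fun i => (hid (π i) i).map_eq]

theorem MeasureTheory.MemLp.exists_dependsOn_finset_eLpNorm_sub_le {ι : Type*} {α : ι → Type*}
    [∀ i, MeasurableSpace (α i)] {E : Type*} [NormedAddCommGroup E] {μ : Measure (Π i, α i)}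
    [IsFiniteMeasure μ] {p : ℝ≥0∞} (hp1 : 1 ≤ p) (hp : p ≠ ∞) {f : (Π i, α i) → E}
    (hf : MemLp f p μ) {ε : ℝ≥0∞} (hε : ε ≠ 0) :
    ∃ g, eLpNorm (f - g) p μ ≤ ε ∧ StronglyMeasurable g ∧ ∃ I : Finset ι, DependsOn g I := by
  classical
  have : Fact (1 ≤ p) := ⟨hp1⟩
  have : Fact (p ≠ ∞) := ⟨hp⟩
  have hdense : μ.MeasureDense (measurableCylinders α) :=
    .of_generateFrom_isSetAlgebra_finite μ isSetAlgebra_measurableCylinders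
      generateFrom_measurableCylinders.symm
  refine hf.induction_dense hp _ (fun c s hs hμs ε hε => ?_) (fun f g hf hg => ?_)
    (fun f hf => hf.1.aestronglyMeasurable) hε
  · obtain ⟨-, ⟨t, ht, hμt, rfl⟩, hdist⟩ := EMetric.mem_closure_iff.1
      (hdense.indicatorConstLp_subset_closure p c ⟨s, hs, hμs.ne, rfl⟩) ε (pos_iff_ne_zero.2 hε)
    rw [edist_comm, indicatorConstLp, indicatorConstLp, Lp.edist_toLp_toLp] at hdist
    obtain ⟨I, S, -, rfl⟩ := (mem_measurableCylinders t).1 ht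
    exact ⟨_, hdist.le, stronglyMeasurable_const.indicator (hdense.measurable _ ht),
      I, dependsOn_cylinder_indicator_const S c⟩
  · obtain ⟨hf, I, hI⟩ := hf
    obtain ⟨hg, J, hJ⟩ := hg
    refine ⟨hf.add hg, I ∪ J, fun x y hxy => ?_⟩
    simp only [Pi.add_apply, Finset.coe_union] at hxy ⊢
    rw [hI fun i hi => hxy i (.inl hi), hJ fun i hi => hxy i (.inr hi)]

section Telescoping
variable {β E : Type*} [MeasurableSpace β] [NormedAddCommGroup E] {μ : Measure β} {p : ℝ≥0∞}

theorem MeasureTheory.eLpNorm_sub_le_eLpNorm_sub_add_eLpNorm_sub {f g h : β → E}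
    (hf : AEStronglyMeasurable f μ) (hg : AEStronglyMeasurable g μ)
    (hh : AEStronglyMeasurable h μ) (hp : 1 ≤ p) :
    eLpNorm (f - h) p μ ≤ eLpNorm (f - g) p μ + eLpNorm (g - h) p μ := by
  simpa using eLpNorm_add_le (hf.sub hg) (hg.sub hh) hp

theorem MeasureTheory.eLpNorm_sub_le_sum_range_add {f : ℕ → β → E} {g : β → E}
    (hf : ∀ n, AEStronglyMeasurable (f n) μ) (hg : AEStronglyMeasurable g μ) (hp : 1 ≤ p)
    (m : ℕ) :
    eLpNorm (f 0 - g) p μ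
      ≤ ∑ s ∈ Finset.range m, eLpNorm (f s - f (s + 1)) p μ + eLpNorm (f m - g) p μ := by
  induction m with
  | zero => simp
  | succ m ih =>
    calc _ ≤ _ := ih
      _ ≤ ∑ s ∈ Finset.range m, eLpNorm (f s - f (s + 1)) p μ
            + (eLpNorm (f m - f (m + 1)) p μ + eLpNorm (f (m + 1) - g) p μ) := by
          gcongr
          exact eLpNorm_sub_le_eLpNorm_sub_add_eLpNorm_sub (hf m) (hf (m + 1)) hg hp
      _ = _ := by rw [Finset.sum_range_succ, add_assoc]

end Telescoping

section Coupling

variable {α : Type*}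

theorem Set.empty_symmDiff (s : Set α) : ∅ ∆ s = s := bot_symmDiff s

open Classical in
/-- With `x (inl k) = ε_{-k}` and `x (inr k) = ε*_{-k}`, this is `𝛆_0` with the lags in `S` taken
from the copy: `replaceLags (Set.Ici j) x` is `𝛆*_{0,j}` and `replaceLags {j} x` is `𝛆̃_{0,j}`. -/
noncomputable def replaceLags (S : Set ℕ) (x : ℕ ⊕ ℕ → α) : ℕ → α :=
  fun k => if k ∈ S then x (.inr k) else x (.inl k)

open Classical in
noncomputable def swapLags (U : Set ℕ) : ℕ ⊕ ℕ → ℕ ⊕ ℕ :=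
  Sum.elim (fun k => if k ∈ U then .inr k else .inl k) (fun k => if k ∈ U then .inl k else .inr k)

theorem swapLags_involutive (U : Set ℕ) : (swapLags U).Involutive := by
  rintro (k | k) <;> by_cases hk : k ∈ U <;> simp [swapLags, hk]

theorem replaceLags_comp_swapLags (S U : Set ℕ) (x : ℕ ⊕ ℕ → α) :
    replaceLags S (x ∘ swapLags U) = replaceLags (S ∆ U) x := by
  funext k
  by_cases hS : k ∈ S <;> by_cases hU : k ∈ U <;>
    simp [replaceLags, swapLags, hS, hU, Set.mem_symmDiff]

theorem replaceLags_empty (x : ℕ ⊕ ℕ → α) : replaceLags ∅ x = fun k => x (.inl k) := by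
  funext k
  simp [replaceLags]

theorem replaceLags_Ici (j : ℕ) (x : ℕ ⊕ ℕ → α) :
    replaceLags (Set.Ici j) x = fun k => if k < j then x (.inl k) else x (.inr k) := by
  funext k
  by_cases hk : k < j <;> simp [replaceLags, hk]

theorem replaceLags_singleton (j : ℕ) (x : ℕ ⊕ ℕ → α) :
    replaceLags {j} x = fun k => if k = j then x (.inr k) else x (.inl k) := by
  funext k
  simp [replaceLags]

theorem measurable_replaceLags [MeasurableSpace α] (S : Set ℕ) :
    Measurable (replaceLags (α := α) S) := by
  refine measurable_pi_lambda _ fun k => ?_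
  unfold replaceLags
  split_ifs <;> exact measurable_pi_apply _

variable [MeasurableSpace α] {E : Type*} [NormedAddCommGroup E] {μ : Measure (ℕ ⊕ ℕ → α)}
  {p : ℝ≥0∞} {G : (ℕ → α) → E}

theorem eLpNorm_replaceLags_symmDiff (hμ : ∀ U, MeasurePreserving (· ∘ swapLags U) μ μ)
    {H : (ℕ → α) → E} (hG : StronglyMeasurable G) (hH : StronglyMeasurable H) (S T U : Set ℕ) :
    eLpNorm (fun x => G (replaceLags (S ∆ U) x) - H (replaceLags (T ∆ U) x)) p μ
      = eLpNorm (fun x => G (replaceLags S x) - H (replaceLags T x)) p μ := by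
  have hF : StronglyMeasurable fun x => G (replaceLags S x) - H (replaceLags T x) :=
    (hG.comp_measurable (measurable_replaceLags S)).sub
      (hH.comp_measurable (measurable_replaceLags T))
  have h := eLpNorm_comp_measurePreserving (p := p) hF.aestronglyMeasurable (hμ U)
  simp only [← replaceLags_comp_swapLags]
  exact h

theorem tendsto_eLpNorm_sub_replaceLags_Ici [IsFiniteMeasure μ]
    (hμ : ∀ U, MeasurePreserving (· ∘ swapLags U) μ μ) (hp1 : 1 ≤ p) (hp : p ≠ ∞)
    (hG : StronglyMeasurable G) (hGp : MemLp (fun x => G (replaceLags ∅ x)) p μ) :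
    Tendsto (fun t => eLpNorm (fun x => G (replaceLags ∅ x) - G (replaceLags (Set.Ici t) x)) p μ)
      atTop (𝓝 0) := by
  rw [ENNReal.tendsto_nhds_zero]
  intro r hr
  have hR := measurable_replaceLags (α := α) ∅
  have hGν : MemLp G p (μ.map (replaceLags ∅)) :=
    (memLp_map_measure_iff hG.aestronglyMeasurable hR.aemeasurable).2 hGp
  obtain ⟨H, hGH, hH, I, hI⟩ :=
    hGν.exists_dependsOn_finset_eLpNorm_sub_le hp1 hp (ENNReal.half_pos hr.ne').ne'
  replace hGH : eLpNorm (fun x => G (replaceLags ∅ x) - H (replaceLags ∅ x)) p μ ≤ r / 2 := by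
    rwa [eLpNorm_map_measure (hG.sub hH).aestronglyMeasurable hR.aemeasurable] at hGH
  filter_upwards [eventually_gt_atTop (I.sup id)] with t ht
  have hHt : ∀ x, H (replaceLags ∅ x) = H (replaceLags (Set.Ici t) x) := fun x =>
    hI fun k hk => by
      have : k < t := (Finset.le_sup (f := id) hk).trans_lt ht
      simp [replaceLags, not_le.2 this]
  have hGR (S : Set ℕ) : AEStronglyMeasurable (fun x => G (replaceLags S x)) μ :=
    (hG.comp_measurable (measurable_replaceLags S)).aestronglyMeasurable
  have hHR (S : Set ℕ) : AEStronglyMeasurable (fun x => H (replaceLags S x)) μ :=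
    (hH.comp_measurable (measurable_replaceLags S)).aestronglyMeasurable
  calc eLpNorm (fun x => G (replaceLags ∅ x) - G (replaceLags (Set.Ici t) x)) p μ
      ≤ eLpNorm (fun x => G (replaceLags ∅ x) - H (replaceLags ∅ x)) p μ
        + eLpNorm (fun x => H (replaceLags (Set.Ici t) x) - G (replaceLags (Set.Ici t) x)) p μ := by
        simp only [hHt]
        exact eLpNorm_sub_le_eLpNorm_sub_add_eLpNorm_sub (hGR _) (hHR _) (hGR _) hp1
    _ = eLpNorm (fun x => G (replaceLags ∅ x) - H (replaceLags ∅ x)) p μ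
        + eLpNorm (fun x => H (replaceLags ∅ x) - G (replaceLags ∅ x)) p μ := by
        rw [← eLpNorm_replaceLags_symmDiff hμ hH hG ∅ ∅ (Set.Ici t), Set.empty_symmDiff]
    _ ≤ r / 2 + r / 2 :=
        add_le_add hGH ((eLpNorm_sub_comm (fun x => H (replaceLags ∅ x)) _ p μ).trans_le hGH)
    _ = r := ENNReal.add_halves r

theorem eLpNorm_sub_replaceLags_Ici_le_tsum [IsFiniteMeasure μ]
    (hμ : ∀ U, MeasurePreserving (· ∘ swapLags U) μ μ) (hp1 : 1 ≤ p) (hp : p ≠ ∞)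
    (hG : StronglyMeasurable G) (hGp : MemLp (fun x => G (replaceLags ∅ x)) p μ) (j : ℕ) :
    eLpNorm (fun x => G (replaceLags ∅ x) - G (replaceLags (Set.Ici j) x)) p μ
      ≤ ∑' s, eLpNorm (fun x => G (replaceLags ∅ x) - G (replaceLags {j + s} x)) p μ := by
  set b := fun s => eLpNorm (fun x => G (replaceLags ∅ x) - G (replaceLags {j + s} x)) p μ
  set tail := fun t => eLpNorm (fun x => G (replaceLags ∅ x) - G (replaceLags (Set.Ici t) x)) p μ
  have hGR (S : Set ℕ) : AEStronglyMeasurable (fun x => G (replaceLags S x)) μ :=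
    (hG.comp_measurable (measurable_replaceLags S)).aestronglyMeasurable
  have hstep (s : ℕ) : eLpNorm (fun x => G (replaceLags (Set.Ico j (j + s)) x)
      - G (replaceLags (Set.Ico j (j + (s + 1))) x)) p μ = b s := by
    have : {j + s} ∆ Set.Ico j (j + s) = Set.Ico j (j + (s + 1)) := by
      ext k; simp only [Set.mem_symmDiff, Set.mem_singleton_iff, Set.mem_Ico]; omega
    have h := eLpNorm_replaceLags_symmDiff (p := p) hμ hG hG ∅ {j + s} (Set.Ico j (j + s))
    rwa [this, Set.empty_symmDiff] at h
  have hrest (m : ℕ) : eLpNorm (fun x => G (replaceLags (Set.Ico j (j + m)) x)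
      - G (replaceLags (Set.Ici j) x)) p μ = tail (j + m) := by
    have : Set.Ici (j + m) ∆ Set.Ico j (j + m) = Set.Ici j := by
      ext k; simp only [Set.mem_symmDiff, Set.mem_Ici, Set.mem_Ico]; omega
    have h := eLpNorm_replaceLags_symmDiff (p := p) hμ hG hG ∅ (Set.Ici (j + m))
      (Set.Ico j (j + m))
    rwa [this, Set.empty_symmDiff] at h
  have hbound (m : ℕ) : tail j ≤ ∑' s, b s + tail (j + m) := by
    have htel := eLpNorm_sub_le_sum_range_add
      (f := fun s x => G (replaceLags (Set.Ico j (j + s)) x)) (fun _ => hGR _) (hGR (Set.Ici j))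
      hp1 m
    simp only [Pi.sub_def, add_zero, Set.Ico_self] at htel
    calc tail j ≤ ∑ s ∈ Finset.range m, b s + tail (j + m) := by
          simpa only [hstep, hrest] using htel
      _ ≤ ∑' s, b s + tail (j + m) := by gcongr; exact ENNReal.sum_le_tsum _
  have hlim : Tendsto (fun m => ∑' s, b s + tail (j + m)) atTop (𝓝 (∑' s, b s)) := by
    have htail := (tendsto_eLpNorm_sub_replaceLags_Ici hμ hp1 hp hG hGp).comp
      (tendsto_atTop_mono (fun m => Nat.le_add_left m j) tendsto_id)
    simpa using tendsto_const_nhds.add htail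
  exact ge_of_tendsto' hlim hbound

end Coupling

/-- Proposition C.1: comparing the all-coordinates replacement `𝛆*_{0,j}` with the
single-coordinate replacements `𝛆̃_{0,j+s}`.  The family `η` indexed by `ℕ ⊕ ℕ` consists of
iid random variables; `η (inl k)` plays the role of `ε_{−k}` and `η (inr k)` of `ε*_{−k}`. -/
theorem stmt_10 {Ω : Type*} [MeasureSpace Ω] [IsProbabilityMeasure (ℙ : Measure Ω)]
    {d : ℕ} (q : ℝ) (hq : 1 ≤ q)
    (η : ℕ ⊕ ℕ → Ω → ℝ)
    (hmeas : ∀ i, Measurable (η i))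
    (hindep : iIndepFun η ℙ)
    (hid : ∀ i j, IdentDistrib (η i) (η j) ℙ ℙ)
    (G : (ℕ → ℝ) → EuclideanSpace ℝ (Fin d))
    (hG : Measurable G)
    (hLq : MemLp (fun ω => G (fun k => η (Sum.inl k) ω)) (ENNReal.ofReal q) ℙ)
    (j : ℕ) :
    eLpNorm (fun ω => G (fun k => η (Sum.inl k) ω)
        - G (fun k => if k < j then η (Sum.inl k) ω else η (Sum.inr k) ω))
      (ENNReal.ofReal q) ℙ
    ≤ ∑' s : ℕ,
        eLpNorm (fun ω => G (fun k => η (Sum.inl k) ω)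
            - G (fun k => if k = j + s then η (Sum.inr k) ω else η (Sum.inl k) ω))
          (ENNReal.ofReal q) ℙ := by
  have hp1 : 1 ≤ ENNReal.ofReal q := by simpa using ENNReal.ofReal_le_ofReal hq
  have hΦ : Measurable fun ω i => η i ω := measurable_pi_lambda _ hmeas
  have hlaw (S T : Set ℕ) :
      eLpNorm (fun x => G (replaceLags S x) - G (replaceLags T x)) (ENNReal.ofReal q)
          (Measure.map (fun ω i => η i ω) ℙ)
        = eLpNorm (fun ω => G (replaceLags S fun i => η i ω) - G (replaceLags T fun i => η i ω))
          (ENNReal.ofReal q) ℙ :=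
    eLpNorm_map_measure ((hG.comp (measurable_replaceLags S)).sub
      (hG.comp (measurable_replaceLags T))).aestronglyMeasurable hΦ.aemeasurable
  have key := eLpNorm_sub_replaceLags_Ici_le_tsum
    (fun U => hindep.measurePreserving_comp_right hmeas hid (swapLags_involutive U).injective)
    hp1 ENNReal.ofReal_ne_top hG.stronglyMeasurable ?_ j
  · simp only [hlaw] at key
    simpa only [replaceLags_empty, replaceLags_Ici, replaceLags_singleton] using key
  · refine (memLp_map_measure_iff (hG.comp (measurable_replaceLags ∅)).aestronglyMeasurable
      hΦ.aemeasurable).2 ?_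
    simpa only [Function.comp_def, replaceLags_empty] using hLq
end

section
/- Let g : [0,1] → ℝ be bounded by C_f and have finite p-variation. Define F(u) = ∫_0^u g(v) dv and, for integers 0 ≤ m < n, the truncated Riemann sum I(u) = (1/n) ∑_{t=m+1}^{⌊nu⌋} g(t/n). Then sup_{u ∈ [0,1]} |I(u) − ∫_{(m+1)/n ∧ u}^u g(v) dv| ≤ ‖g‖_{p-var} n^{−1/p} + C_f/n, and sup_{u ∈ [0,1]} |I(u) − F(u)| ≤ ‖g‖_{p-var} n^{−1/p} + C_f (m+2)/n. -/
open MeasureTheory Finset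

/-!
On a grid cell `[a, b]` of length at most `1/n` the error of the left-point rule is
`∫_a^b (g a - g)`, which up to an arbitrary `ε` is at most `(1/n) |g x - g a|` for some
`x ∈ (a, b)`. The intervals `[a, x]` of distinct cells are disjoint, so the `p`-th powers of
these increments sum to at most `‖g‖_{p-var}^p`, and the power-mean inequality over the at most
`n` cells turns this into `∑ |g x - g a| ≤ n^{1-1/p} ‖g‖_{p-var}`. The last cell `[⌊nu⌋/n, u]`
may be shorter than `1/n`, which costs `C_f/n`, and the integral over `[0, (m+1)/n ∧ u]` costs
at most `C_f (m+1)/n`.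
-/

open Set

section PVariation

variable {E : Type*} [NormedAddCommGroup E] {p : ℝ} {g : ℝ → E}

theorem pVar_nonneg (hg : BddAbove (pVarSums p g)) : 0 ≤ pVar p g := by
  refine le_trans ?_ (le_csSup hg
    ⟨1, fun i => (i : ℝ), one_pos, Nat.cast_zero, Nat.cast_one, fun i _ => by simp, rfl⟩)
  positivity

theorem le_pVar_of_chain (hp : 0 ≤ p) (hg : BddAbove (pVarSums p g)) {L : ℕ} {t : ℕ → ℝ}
    (ht : ∀ i < L, t i < t (i + 1)) (h0 : 0 < t 0) (h1 : t L < 1) :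
    (∑ i ∈ range L, ‖g (t (i + 1)) - g (t i)‖ ^ p) ^ (1 / p) ≤ pVar p g := by
  set u : ℕ → ℝ := fun i => if i = 0 then 0 else if i ≤ L + 1 then t (i - 1) else 1 with hu
  have hu_zero : u 0 = 0 := rfl
  have hu_t : ∀ i ≤ L, u (i + 1) = t i := fun i hi => by simp [hu, hi]
  have hu_one : u (L + 2) = 1 := by simp [hu]
  have hu_strict : ∀ i < L + 2, u i < u (i + 1) := by
    rintro (_ | i) hi
    · rwa [hu_zero, hu_t 0 (Nat.zero_le L)]
    · rcases (show i < L ∨ i = L by omega) with hi | rfl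
      · rw [hu_t i hi.le, hu_t (i + 1) hi]; exact ht i hi
      · rwa [hu_t i le_rfl, hu_one]
  have hmem : (∑ i ∈ range (L + 2), ‖g (u (i + 1)) - g (u i)‖ ^ p) ^ (1 / p) ∈ pVarSums p g :=
    ⟨L + 2, u, by omega, hu_zero, hu_one, hu_strict, rfl⟩
  refine le_trans (Real.rpow_le_rpow (by positivity) ?_ (by positivity)) (le_csSup hg hmem)
  rw [sum_range_succ, sum_range_succ']
  have hinner : ∑ i ∈ range L, ‖g (t (i + 1)) - g (t i)‖ ^ p
      = ∑ i ∈ range L, ‖g (u (i + 1 + 1)) - g (u (i + 1))‖ ^ p :=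
    sum_congr rfl fun i hi => by
      have hi := mem_range.1 hi
      rw [hu_t i hi.le, hu_t (i + 1) hi]
  rw [hinner]
  have := Real.rpow_nonneg (norm_nonneg (g (u (0 + 1)) - g (u 0))) p
  have := Real.rpow_nonneg (norm_nonneg (g (u (L + 1 + 1)) - g (u (L + 1)))) p
  linarith

theorem le_pVar_of_disjoint_pairs (hp : 0 < p) (hg : BddAbove (pVarSums p g)) {N : ℕ}
    {a b : ℕ → ℝ} (hab : ∀ j < N, a j < b j) (hba : ∀ j, j + 1 < N → b j < a (j + 1))
    (h0 : 0 < a 0) (h1 : ∀ j < N, b j < 1) :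
    (∑ j ∈ range N, ‖g (b j) - g (a j)‖ ^ p) ^ (1 / p) ≤ pVar p g := by
  rcases N.eq_zero_or_pos with rfl | hN
  · simp only [range_zero, sum_empty]
    rw [Real.zero_rpow (one_div_ne_zero hp.ne')]
    exact pVar_nonneg hg
  set t : ℕ → ℝ := fun i => if i % 2 = 0 then a (i / 2) else b (i / 2) with ht
  have ht_even : ∀ j, t (2 * j) = a j := fun j => by simp [ht]
  have ht_odd : ∀ j, t (2 * j + 1) = b j := fun j => by
    simp only [ht]
    rw [if_neg (by omega), show (2 * j + 1) / 2 = j by omega]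
  refine le_trans (Real.rpow_le_rpow (by positivity) ?_ (by positivity))
    (le_pVar_of_chain hp.le hg (L := 2 * N - 1) (t := t) ?_ ?_ ?_)
  · calc ∑ j ∈ range N, ‖g (b j) - g (a j)‖ ^ p
        = ∑ i ∈ (range N).image (2 * ·), ‖g (t (i + 1)) - g (t i)‖ ^ p := by
          rw [sum_image fun _ _ _ _ h => by simpa using h]
          simp only [ht_even, ht_odd]
      _ ≤ ∑ i ∈ range (2 * N - 1), ‖g (t (i + 1)) - g (t i)‖ ^ p :=
          sum_le_sum_of_subset_of_nonneg (fun i => by simp; omega) fun _ _ _ => by positivity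
  · intro i hi
    obtain ⟨j, rfl | rfl⟩ := Nat.even_or_odd' i
    · rw [ht_even, ht_odd]; exact hab j (by omega)
    · rw [ht_odd, show 2 * j + 1 + 1 = 2 * (j + 1) by ring, ht_even]; exact hba j (by omega)
  · simpa [ht] using h0
  · rw [show 2 * N - 1 = 2 * (N - 1) + 1 by omega, ht_odd]; exact h1 _ (by omega)

end PVariation

theorem sum_le_card_rpow_mul_sum_rpow_rpow {ι : Type*} (s : Finset ι) {f : ι → ℝ} {p : ℝ}
    (hp : 1 ≤ p) (hf : ∀ i ∈ s, 0 ≤ f i) :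
    ∑ i ∈ s, f i ≤ (#s : ℝ) ^ (1 - 1 / p) * (∑ i ∈ s, f i ^ p) ^ (1 / p) := by
  have hp0 : 0 < p := by linarith
  have hsum : 0 ≤ ∑ i ∈ s, f i := sum_nonneg hf
  have hsump : 0 ≤ ∑ i ∈ s, f i ^ p := sum_nonneg fun i hi => Real.rpow_nonneg (hf i hi) p
  calc ∑ i ∈ s, f i = ((∑ i ∈ s, f i) ^ p) ^ (1 / p) := by
        rw [← Real.rpow_mul hsum, mul_one_div_cancel hp0.ne', Real.rpow_one]
    _ ≤ ((#s : ℝ) ^ (p - 1) * ∑ i ∈ s, f i ^ p) ^ (1 / p) :=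
        Real.rpow_le_rpow (by positivity) (Real.rpow_sum_le_const_mul_sum_rpow_of_nonneg s hp hf)
          (by positivity)
    _ = (#s : ℝ) ^ (1 - 1 / p) * (∑ i ∈ s, f i ^ p) ^ (1 / p) := by
        rw [Real.mul_rpow (by positivity) hsump, ← Real.rpow_mul (by positivity)]
        congr 2
        field_simp

section Integral

variable {E : Type*} [NormedAddCommGroup E] [NormedSpace ℝ E]

theorem exists_mem_Ioo_norm_integral_le (f : ℝ → E) {a b ε : ℝ} (hab : a < b) (hε : 0 < ε) :
    ∃ x ∈ Ioo a b, ‖∫ y in a..b, f y‖ ≤ (b - a) * ‖f x‖ + ε := by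
  by_contra! h
  set I := ‖∫ y in a..b, f y‖
  have hba : 0 < b - a := sub_pos.2 hab
  have hbound : ∀ x ∈ Ioo a b, ‖f x‖ ≤ (I - ε) / (b - a) := fun x hx => by
    rw [le_div_iff₀ hba]; linarith [h x hx]
  have hI : I ≤ (I - ε) / (b - a) * (b - a) := by
    simpa only [I, intervalIntegral.integral_of_le hab.le, integral_Ioc_eq_integral_Ioo,
      Real.volume_real_Ioo_of_le hab.le] using
      norm_setIntegral_le_of_norm_le_const (μ := volume) measure_Ioo_lt_top hbound
  rw [div_mul_cancel₀ _ hba.ne'] at hI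
  linarith

variable [CompleteSpace E] {p h : ℝ} {g : ℝ → E} {M : ℕ} {w : ℕ → ℝ}

theorem sum_smul_sub_integral_eq_sum_integral
    (hint : ∀ j < M, IntervalIntegrable g volume (w j) (w (j + 1))) :
    ∑ j ∈ range M, (w (j + 1) - w j) • g (w j) - ∫ v in w 0..w M, g v
      = ∑ j ∈ range M, ∫ v in w j..w (j + 1), (g (w j) - g v) := by
  rw [← intervalIntegral.sum_integral_adjacent_intervals hint, ← sum_sub_distrib]
  refine sum_congr rfl fun j hj => ?_
  rw [intervalIntegral.integral_sub intervalIntegrable_const (hint j (mem_range.1 hj)),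
    intervalIntegral.integral_const]

theorem norm_sum_smul_sub_integral_le (hp : 1 ≤ p) (hg : BddAbove (pVarSums p g)) (hh : 0 ≤ h)
    (hw : ∀ j < M, w j < w (j + 1)) (hw0 : 0 < w 0) (hw1 : w M ≤ 1)
    (hmesh : ∀ j < M, w (j + 1) - w j ≤ h)
    (hint : ∀ j < M, IntervalIntegrable g volume (w j) (w (j + 1))) :
    ‖∑ j ∈ range M, (w (j + 1) - w j) • g (w j) - ∫ v in w 0..w M, g v‖
      ≤ h * M ^ (1 - 1 / p) * pVar p g := by
  rw [sum_smul_sub_integral_eq_sum_integral hint]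
  refine le_of_forall_pos_le_add fun ε hε => ?_
  have hε' : 0 < ε / (M + 1) := by positivity
  have hsel : ∀ j, ∃ x, j < M → x ∈ Ioo (w j) (w (j + 1)) ∧
      ‖∫ v in w j..w (j + 1), (g (w j) - g v)‖ ≤ h * ‖g x - g (w j)‖ + ε / (M + 1) := by
    intro j
    by_cases hj : j < M
    · obtain ⟨x, hx, hbound⟩ :=
        exists_mem_Ioo_norm_integral_le (fun v => g (w j) - g v) (hw j hj) hε'
      refine ⟨x, fun _ => ⟨hx, hbound.trans ?_⟩⟩
      rw [norm_sub_rev]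
      gcongr
      exact hmesh j hj
    · exact ⟨0, fun h => absurd h hj⟩
  choose x hx using hsel
  have hwmono : MonotoneOn w (Set.Iic M) := (strictMonoOn_Iic_of_lt_succ hw).monotoneOn
  have hpairs := le_pVar_of_disjoint_pairs (by linarith) hg (fun j hj => (hx j hj).1.1)
    (fun j hj => (hx j (by omega)).1.2) hw0
    fun j hj => ((hx j hj).1.2.trans_le (hwmono (by simp; omega) (by simp) (by omega))).trans_le hw1
  calc ‖∑ j ∈ range M, ∫ v in w j..w (j + 1), (g (w j) - g v)‖
      ≤ ∑ j ∈ range M, (h * ‖g (x j) - g (w j)‖ + ε / (M + 1)) :=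
        (norm_sum_le _ _).trans (sum_le_sum fun j hj => (hx j (mem_range.1 hj)).2)
    _ = h * ∑ j ∈ range M, ‖g (x j) - g (w j)‖ + M / (M + 1) * ε := by
        rw [sum_add_distrib, ← mul_sum, sum_const, card_range, nsmul_eq_mul]
        ring
    _ ≤ h * (M ^ (1 - 1 / p) * pVar p g) + 1 * ε := by
        gcongr
        · refine (sum_le_card_rpow_mul_sum_rpow_rpow _ hp fun _ _ => norm_nonneg _).trans ?_
          rw [card_range]
          exact mul_le_mul_of_nonneg_left hpairs (by positivity)
        · rw [div_le_one (by positivity)]; linarith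
    _ = h * M ^ (1 - 1 / p) * pVar p g + ε := by ring

end Integral

section RiemannSum

variable {p Cf : ℝ} {g : ℝ → ℝ} {m n N : ℕ} {w : ℕ → ℝ}

theorem one_div_mul_rpow_le_rpow_neg {M : ℕ} (hp : 1 ≤ p) (hMn : M ≤ n) (hn : 0 < n) :
    1 / (n : ℝ) * (M : ℝ) ^ (1 - 1 / p) ≤ (n : ℝ) ^ (-(1 / p)) := by
  have hn' : (0 : ℝ) < n := Nat.cast_pos.2 hn
  have hexp : 0 ≤ 1 - 1 / p := by
    rw [sub_nonneg, div_le_one (by linarith)]; exact hp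
  calc 1 / (n : ℝ) * (M : ℝ) ^ (1 - 1 / p) ≤ 1 / n * (n : ℝ) ^ (1 - 1 / p) := by
        gcongr
    _ = (n : ℝ) ^ (-(1 / p)) := by
        rw [Real.rpow_sub hn', Real.rpow_one, Real.rpow_neg hn'.le]
        field_simp

theorem one_div_mul_sum_Icc_eq_sum_mul_add
    (hw : ∀ j ≤ N, w j = ((m + 1 + j : ℕ) : ℝ) / n) :
    1 / (n : ℝ) * ∑ t ∈ Finset.Icc (m + 1) (m + 1 + N), g ((t : ℝ) / n)
      = ∑ j ∈ range (N + 1), (w (j + 1) - w j) * g (w j)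
        + (1 / n - (w (N + 1) - w N)) * g (w N) := by
  rw [← Finset.Ico_add_one_right_eq_Icc, sum_Ico_eq_sum_range,
    show m + 1 + N + 1 - (m + 1) = N + 1 by omega, sum_range_succ, sum_range_succ, mul_add,
    mul_sum, ← hw N le_rfl]
  have hterm : ∀ j ∈ range N, 1 / (n : ℝ) * g (((m + 1 + j : ℕ) : ℝ) / n)
      = (w (j + 1) - w j) * g (w j) := fun j hj => by
    have hj := mem_range.1 hj
    rw [hw j hj.le, hw (j + 1) hj]
    push_cast
    ring
  rw [sum_congr rfl hterm]
  ring

theorem abs_sum_mul_sub_integral_le_of_uniform (hp : 1 ≤ p) (hfin : BddAbove (pVarSums p g))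
    (hNn : N + 1 ≤ n) (hstep : ∀ j < N, w (j + 1) - w j = 1 / n) (hlast : w N ≤ w (N + 1))
    (hlast' : w (N + 1) - w N ≤ 1 / n) (hw0 : 0 < w 0) (hw1 : w (N + 1) ≤ 1)
    (hint : ∀ j < N + 1, IntervalIntegrable g volume (w j) (w (j + 1))) :
    |∑ j ∈ range (N + 1), (w (j + 1) - w j) * g (w j) - ∫ v in w 0..w (N + 1), g v|
      ≤ pVar p g * (n : ℝ) ^ (-(1 / p)) := by
  have hn : (0 : ℝ) < n := Nat.cast_pos.2 (by omega)
  have hmesh : ∀ j < N + 1, w (j + 1) - w j ≤ 1 / n := fun j hj => by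
    rcases (show j < N ∨ j = N by omega) with hj | rfl
    · exact (hstep j hj).le
    · exact hlast'
  have hgrid : ∀ M ≤ N + 1, (∀ j < M, w j < w (j + 1)) → w M ≤ 1 →
      |∑ j ∈ range M, (w (j + 1) - w j) * g (w j) - ∫ v in w 0..w M, g v|
        ≤ pVar p g * (n : ℝ) ^ (-(1 / p)) := fun M hM hstrict hwM => by
    refine (norm_sum_smul_sub_integral_le hp hfin (by positivity) hstrict hw0 hwM
      (fun j hj => hmesh j (by omega)) (fun j hj => hint j (by omega))).trans ?_
    rw [mul_comm (pVar p g)]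
    exact mul_le_mul_of_nonneg_right (one_div_mul_rpow_le_rpow_neg hp (by omega) (by omega))
      (pVar_nonneg hfin)
  have hlt : ∀ j < N, w j < w (j + 1) := fun j hj => by
    linarith [hstep j hj, one_div_pos.2 hn]
  rcases hlast.lt_or_eq with hlast | heq
  · refine hgrid (N + 1) le_rfl (fun j hj => ?_) hw1
    rcases (show j < N ∨ j = N by omega) with hj | rfl
    · exact hlt j hj
    · exact hlast
  · -- a last step of length zero is dropped, since chains in `pVarSums` increase strictly
    rw [sum_range_succ, ← heq, sub_self, zero_mul, add_zero]
    exact hgrid N (by omega) hlt (heq ▸ hw1)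

theorem abs_riemannSum_sub_integral_le_of_floor_eq (hp : 1 ≤ p)
    (hbd : ∀ v ∈ Icc (0 : ℝ) 1, |g v| ≤ Cf) (hfin : BddAbove (pVarSums p g))
    (hint : IntervalIntegrable g volume 0 1) (hn : 0 < n) {u : ℝ} (hu : u ∈ Icc (0 : ℝ) 1)
    (hkN : ⌊(n : ℝ) * u⌋₊ = m + 1 + N) :
    |(1 / (n : ℝ)) * ∑ t ∈ Finset.Icc (m + 1) ⌊(n : ℝ) * u⌋₊, g ((t : ℝ) / n)
        - ∫ v in (((m + 1 : ℝ) / n) ⊓ u)..u, g v|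
      ≤ pVar p g * (n : ℝ) ^ (-(1 / p)) + Cf / n := by
  have hn' : (0 : ℝ) < n := Nat.cast_pos.2 hn
  have hku : ((m + 1 + N : ℕ) : ℝ) / n ≤ u := by
    rw [div_le_iff₀' hn', ← hkN]; exact Nat.floor_le (mul_nonneg hn'.le hu.1)
  have huk : u < ((m + 1 + (N + 1) : ℕ) : ℝ) / n := by
    rw [lt_div_iff₀' hn', ← add_assoc, Nat.cast_succ, ← hkN]; exact Nat.lt_floor_add_one _
  set w : ℕ → ℝ := fun j => min (((m + 1 + j : ℕ) : ℝ) / n) u with hw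
  have hw_grid : ∀ j ≤ N, w j = ((m + 1 + j : ℕ) : ℝ) / n := fun j hj =>
    min_eq_left <| le_trans (by gcongr) hku
  have hw_last : w (N + 1) = u := min_eq_right huk.le
  have hw_mem : ∀ j, w j ∈ Icc (0 : ℝ) 1 := fun j =>
    ⟨le_min (by positivity) hu.1, (min_le_right _ _).trans hu.2⟩
  have hgap : w (N + 1) - w N ≤ 1 / n := by
    have hstep : ((m + 1 + (N + 1) : ℕ) : ℝ) / n = ((m + 1 + N : ℕ) : ℝ) / n + 1 / n := by
      push_cast; ring
    rw [hw_last, hw_grid N le_rfl]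
    linarith
  have hkn : m + 1 + N ≤ n := by
    exact_mod_cast (div_le_one hn').1 ((hw_grid N le_rfl).symm.trans_le (hw_mem N).2)
  have hgrid := abs_sum_mul_sub_integral_le_of_uniform hp hfin (by omega)
    (fun j hj => by rw [hw_grid j hj.le, hw_grid (j + 1) hj]; push_cast; ring)
    (by rw [hw_last, hw_grid N le_rfl]; exact hku) hgap
    (by rw [hw_grid 0 (Nat.zero_le N)]; positivity) (hw_mem _).2
    (fun j _ => hint.mono_set <|
      uIcc_subset_uIcc (by simpa using hw_mem j) (by simpa using hw_mem (j + 1)))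
  have hrem : |(1 / n - (w (N + 1) - w N)) * g (w N)| ≤ Cf / n := by
    have hlast : w N ≤ w (N + 1) := by rw [hw_last, hw_grid N le_rfl]; exact hku
    rw [abs_mul, abs_of_nonneg (by linarith), div_eq_mul_one_div Cf, mul_comm Cf]
    exact mul_le_mul (by linarith) (hbd _ (hw_mem N)) (abs_nonneg _) (by positivity)
  have hc : ((m + 1 : ℝ) / n) ⊓ u = w 0 := by simp [hw]
  rw [hkN, one_div_mul_sum_Icc_eq_sum_mul_add hw_grid, hc]
  rw [hw_last] at hgrid
  calc _ = |(∑ j ∈ range (N + 1), (w (j + 1) - w j) * g (w j) - ∫ v in w 0..u, g v)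
        + (1 / n - (w (N + 1) - w N)) * g (w N)| := by ring_nf
    _ ≤ _ := (abs_add_le _ _).trans (add_le_add hgrid hrem)

theorem abs_riemannSum_sub_integral_le (hp : 1 ≤ p) (hbd : ∀ v ∈ Icc (0 : ℝ) 1, |g v| ≤ Cf)
    (hfin : BddAbove (pVarSums p g)) (hint : IntervalIntegrable g volume 0 1) (hmn : m < n)
    {u : ℝ} (hu : u ∈ Icc (0 : ℝ) 1) :
    |(1 / (n : ℝ)) * ∑ t ∈ Finset.Icc (m + 1) ⌊(n : ℝ) * u⌋₊, g ((t : ℝ) / n)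
        - ∫ v in (((m + 1 : ℝ) / n) ⊓ u)..u, g v|
      ≤ pVar p g * (n : ℝ) ^ (-(1 / p)) + Cf / n := by
  obtain hkm | hmk := le_or_gt ⌊(n : ℝ) * u⌋₊ m
  · have hn : (0 : ℝ) < n := Nat.cast_pos.2 (by omega)
    have hc : ((m + 1 : ℝ) / n) ⊓ u = u := min_eq_right <| by
      rw [le_div_iff₀' hn]
      exact (Nat.lt_floor_add_one _).le.trans (by exact_mod_cast Nat.add_le_add_right hkm 1)
    rw [Finset.Icc_eq_empty (by omega), sum_empty, mul_zero, hc, intervalIntegral.integral_same,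
      sub_zero, abs_zero]
    have := pVar_nonneg hfin
    have := (abs_nonneg _).trans (hbd 0 (left_mem_Icc.2 zero_le_one))
    positivity
  obtain ⟨N, hkN⟩ : ∃ N, ⌊(n : ℝ) * u⌋₊ = m + 1 + N := ⟨⌊(n : ℝ) * u⌋₊ - (m + 1), by omega⟩
  exact abs_riemannSum_sub_integral_le_of_floor_eq hp hbd hfin hint (by omega) hu hkN

theorem abs_riemannSum_sub_integral_zero_le (hp : 1 ≤ p)
    (hbd : ∀ v ∈ Icc (0 : ℝ) 1, |g v| ≤ Cf) (hfin : BddAbove (pVarSums p g))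
    (hint : IntervalIntegrable g volume 0 1) (hmn : m < n) {u : ℝ} (hu : u ∈ Icc (0 : ℝ) 1) :
    |(1 / (n : ℝ)) * ∑ t ∈ Finset.Icc (m + 1) ⌊(n : ℝ) * u⌋₊, g ((t : ℝ) / n)
        - ∫ v in (0 : ℝ)..u, g v|
      ≤ pVar p g * (n : ℝ) ^ (-(1 / p)) + Cf * ((m : ℝ) + 2) / n := by
  have hn : (0 : ℝ) < n := Nat.cast_pos.2 (by omega)
  have hCf : 0 ≤ Cf := (abs_nonneg _).trans (hbd 0 (left_mem_Icc.2 zero_le_one))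
  set c := ((m + 1 : ℝ) / n) ⊓ u
  have hc0 : 0 ≤ c := le_min (by positivity) hu.1
  have hc1 : c ∈ uIcc (0 : ℝ) 1 := by
    rw [Set.uIcc_of_le zero_le_one]; exact ⟨hc0, (min_le_right _ _).trans hu.2⟩
  have hhead : |∫ v in (0 : ℝ)..c, g v| ≤ Cf * ((m + 1) / n) := by
    rw [← Real.norm_eq_abs]
    refine (intervalIntegral.norm_integral_le_of_norm_le_const (C := Cf) fun x hx => ?_).trans ?_
    · rw [uIoc_of_le hc0] at hx
      exact hbd x ⟨hx.1.le, hx.2.trans (by simpa [Set.uIcc_of_le zero_le_one] using hc1.2)⟩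
    · rw [sub_zero, abs_of_nonneg hc0]
      exact mul_le_mul_of_nonneg_left (min_le_left _ _) hCf
  rw [← intervalIntegral.integral_add_adjacent_intervals
    (hint.mono_set (uIcc_subset_uIcc left_mem_uIcc hc1))
    (hint.mono_set (uIcc_subset_uIcc hc1 (by simpa [Set.uIcc_of_le zero_le_one] using hu)))]
  calc _ = |((1 / (n : ℝ)) * ∑ t ∈ Finset.Icc (m + 1) ⌊(n : ℝ) * u⌋₊, g ((t : ℝ) / n)
        - ∫ v in c..u, g v) - ∫ v in (0 : ℝ)..c, g v| := by ring_nf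
    _ ≤ _ := (abs_sub _ _).trans
        (add_le_add (abs_riemannSum_sub_integral_le hp hbd hfin hint hmn hu) hhead)
    _ = _ := by ring

end RiemannSum

/-- Lemma C.4: for a bounded function `g` of finite `p`-variation, the truncated Riemann sum
`I(u) = (1/n) ∑_{t=m+1}^{⌊nu⌋} g(t/n)` approximates the integrals
`∫_{(m+1)/n ∧ u}^u g` and `F(u) = ∫_0^u g` uniformly in `u ∈ [0,1]`. -/
theorem stmt_14 (p Cf : ℝ) (hp : 1 ≤ p) (g : ℝ → ℝ)
    (hbd : ∀ v ∈ Set.Icc (0 : ℝ) 1, |g v| ≤ Cf)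
    (hfin : BddAbove (pVarSums p g))
    (hint : IntervalIntegrable g volume 0 1)
    (m n : ℕ) (hmn : m < n) :
    (∀ u ∈ Set.Icc (0 : ℝ) 1,
      |(1 / (n : ℝ)) * ∑ t ∈ Finset.Icc (m + 1) ⌊(n : ℝ) * u⌋₊, g ((t : ℝ) / n)
          - ∫ v in (((m + 1 : ℝ) / n) ⊓ u)..u, g v|
        ≤ pVar p g * (n : ℝ) ^ (-(1 / p)) + Cf / n) ∧
    (∀ u ∈ Set.Icc (0 : ℝ) 1,
      |(1 / (n : ℝ)) * ∑ t ∈ Finset.Icc (m + 1) ⌊(n : ℝ) * u⌋₊, g ((t : ℝ) / n)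
          - ∫ v in (0 : ℝ)..u, g v|
        ≤ pVar p g * (n : ℝ) ^ (-(1 / p)) + Cf * ((m : ℝ) + 2) / n) :=
  ⟨fun _ hu => abs_riemannSum_sub_integral_le hp hbd hfin hint hmn hu,
    fun _ hu => abs_riemannSum_sub_integral_zero_le hp hbd hfin hint hmn hu⟩
end

section
/- Let H_n be random cumulative distribution functions and H a fixed continuous cdf on ℝ such that H_n converges weakly to H in probability (i.e., d(H_n, H) → 0 in probability for any metric d metrizing weak convergence). Then for every α ∈ (0,1), E[H(H_n^{−1}(1−α))] → 1 − α as n → ∞, where H^{−1}(p) = inf{x : H(x) ≥ p} is the quantile function. -/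
/-!
Fix `p = 1 - α` and a small `δ > 0`, and use the intermediate value theorem to pick `a, b` with
`H a = p - δ` and `H b = p + δ`. Outside the events `|H_n(a) - H(a)| > δ/2` and
`|H_n(b) - H(b)| > δ/2`, whose probabilities tend to `0`, we have `H_n(a) < p ≤ H_n(b)`, so the
quantile `H_n⁻¹(p)` lies in `[a, b]` and `H(H_n⁻¹(p))` is within `δ` of `p`. Thus
`H(H_n⁻¹(p)) → p` in probability; since it is bounded by `1`, dominated convergence along
almost surely convergent subsequences gives convergence of the expectations.
-/

open MeasureTheory ProbabilityTheory Filter Topology Set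

theorem Monotone.csInf_setOf_le_mem_Icc {α β : Type*} [ConditionallyCompleteLinearOrder α]
    [LinearOrder β] {F : α → β} (hF : Monotone F) {a b : α} {p : β}
    (ha : F a < p) (hb : p ≤ F b) : sInf {x | p ≤ F x} ∈ Icc a b := by
  have hlower : a ∈ lowerBounds {x | p ≤ F x} := fun x hx =>
    le_of_lt (hF.reflect_lt (ha.trans_le hx))
  exact ⟨le_csInf ⟨b, hb⟩ hlower, csInf_le ⟨a, hlower⟩ hb⟩

theorem Continuous.exists_eq_of_tendsto_atBot_atTop {H : ℝ → ℝ} (hH : Continuous H)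
    {l u c : ℝ} (hbot : Tendsto H atBot (𝓝 l)) (htop : Tendsto H atTop (𝓝 u))
    (hlc : l < c) (hcu : c < u) : ∃ x, H x = c :=
  intermediate_value_univ₂_eventually₂ hH continuous_const
    (hbot.eventually (eventually_le_nhds hlc)) (htop.eventually (eventually_ge_nhds hcu))

theorem tendsto_integral_of_tendstoInMeasure_of_norm_le {α E : Type*} [MeasurableSpace α]
    {μ : Measure α} [IsFiniteMeasure μ] [NormedAddCommGroup E] [NormedSpace ℝ E]
    {F : ℕ → α → E} {f : α → E} {C : ℝ} (hF : ∀ n, AEStronglyMeasurable (F n) μ)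
    (hbound : ∀ n, ∀ᵐ x ∂μ, ‖F n x‖ ≤ C) (hFf : TendstoInMeasure μ F atTop f) :
    Tendsto (fun n => ∫ x, F n x ∂μ) atTop (𝓝 (∫ x, f x ∂μ)) := by
  refine tendsto_of_subseq_tendsto fun ns hns => ?_
  obtain ⟨ms, -, hms⟩ := (hFf.comp hns).exists_seq_tendsto_ae
  exact ⟨ms, tendsto_integral_of_dominated_convergence (fun _ => C) (fun _ => hF _)
    (integrable_const C) (fun _ => hbound _) hms⟩

theorem tendstoInMeasure_apply_quantile {Ω : Type*} [MeasurableSpace Ω] {μ : Measure Ω}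
    {Hn : ℕ → Ω → ℝ → ℝ} {H : ℝ → ℝ} (hHn_mono : ∀ n ω, Monotone (Hn n ω))
    (hH_mono : Monotone H) (hH_cont : Continuous H)
    (hH_bot : Tendsto H atBot (𝓝 0)) (hH_top : Tendsto H atTop (𝓝 1))
    (hconv : ∀ x ε, 0 < ε → Tendsto (fun n => μ {ω | ε < |Hn n ω x - H x|}) atTop (𝓝 0))
    {p : ℝ} (hp0 : 0 < p) (hp1 : p < 1) :
    TendstoInMeasure μ (fun n ω => H (sInf {x | p ≤ Hn n ω x})) atTop (fun _ => p) := by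
  refine tendstoInMeasure_iff_dist.2 fun ε hε => ?_
  obtain ⟨δ, hδ0, hδε, hδp, hδp'⟩ : ∃ δ, 0 < δ ∧ δ < ε ∧ δ < p ∧ δ < 1 - p :=
    ⟨min (ε / 2) (min (p / 2) ((1 - p) / 2)), by positivity,
      (min_le_left _ _).trans_lt (by linarith),
      ((min_le_right _ _).trans (min_le_left _ _)).trans_lt (by linarith),
      ((min_le_right _ _).trans (min_le_right _ _)).trans_lt (by linarith)⟩
  obtain ⟨a, ha⟩ := hH_cont.exists_eq_of_tendsto_atBot_atTop hH_bot hH_top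
    (by linarith : 0 < p - δ) (by linarith : p - δ < 1)
  obtain ⟨b, hb⟩ := hH_cont.exists_eq_of_tendsto_atBot_atTop hH_bot hH_top
    (by linarith : 0 < p + δ) (by linarith : p + δ < 1)
  have hsub : ∀ n, {ω | ε ≤ dist (H (sInf {x | p ≤ Hn n ω x})) p} ⊆
      {ω | δ / 2 < |Hn n ω a - H a|} ∪ {ω | δ / 2 < |Hn n ω b - H b|} := by
    intro n ω hω
    by_contra! hgood
    simp only [mem_union, mem_ofPred_eq, not_or, not_lt, abs_le] at hgood
    have hFa : Hn n ω a < p := by linarith [hgood.1.2]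
    have hFb : p ≤ Hn n ω b := by linarith [hgood.2.1]
    obtain ⟨hqa, hqb⟩ := (hHn_mono n ω).csInf_setOf_le_mem_Icc hFa hFb
    have := hH_mono hqa
    have := hH_mono hqb
    rw [mem_ofPred_eq, Real.dist_eq, le_abs] at hω
    rcases hω with hω | hω <;> linarith
  refine tendsto_of_tendsto_of_tendsto_of_le_of_le tendsto_const_nhds
    (by simpa using (hconv a _ (half_pos hδ0)).add (hconv b _ (half_pos hδ0)))
    (fun _ => bot_le) fun n => (measure_mono (hsub n)).trans (measure_union_le _ _)

theorem stmt_16_general {Ω : Type*} [MeasureSpace Ω] [IsProbabilityMeasure (ℙ : Measure Ω)]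
    (Hn : ℕ → Ω → ℝ → ℝ) (H : ℝ → ℝ)
    (hHn_mono : ∀ n ω, Monotone (Hn n ω))
    (hH_mono : Monotone H) (hH_cont : Continuous H)
    (hH_bot : Tendsto H atBot (nhds 0)) (hH_top : Tendsto H atTop (nhds 1))
    (hconv : ∀ x : ℝ, ∀ ε : ℝ, 0 < ε →
      Tendsto (fun n => ℙ {ω | ε < |Hn n ω x - H x|}) atTop (nhds 0))
    (α : ℝ) (hα0 : 0 < α) (hα1 : α < 1)
    (hmeas : ∀ n, Measurable fun ω => sInf {x | 1 - α ≤ Hn n ω x}) :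
    Tendsto (fun n => ∫ ω, H (sInf {x | 1 - α ≤ Hn n ω x}))
      atTop (nhds (1 - α)) := by
  have hH_norm_le : ∀ x, ‖H x‖ ≤ 1 := fun x => by
    rw [Real.norm_of_nonneg (hH_mono.le_of_tendsto hH_bot x)]
    exact hH_mono.ge_of_tendsto hH_top x
  have hquantile := tendstoInMeasure_apply_quantile hHn_mono hH_mono hH_cont hH_bot hH_top
    hconv (p := 1 - α) (by linarith) (by linarith)
  simpa using tendsto_integral_of_tendstoInMeasure_of_norm_le
    (fun n => (hH_cont.measurable.comp (hmeas n)).aestronglyMeasurable)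
    (fun _ => ae_of_all _ fun _ => hH_norm_le _) hquantile

/-- Asymptotic validity of bootstrap critical values (core of Proposition 4.1): if random
cdfs `H_n` converge weakly in probability to a fixed continuous cdf `H` (equivalently, since
`H` is continuous, pointwise in probability), then `E[H(H_n⁻¹(1−α))] → 1 − α`. -/
theorem stmt_16 {Ω : Type*} [MeasureSpace Ω] [IsProbabilityMeasure (ℙ : Measure Ω)]
    (Hn : ℕ → Ω → ℝ → ℝ) (H : ℝ → ℝ)
    (hHn_mono : ∀ n ω, Monotone (Hn n ω))
    (hHn_rc : ∀ n ω x, ContinuousWithinAt (Hn n ω) (Set.Ici x) x)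
    (hHn_bot : ∀ n ω, Tendsto (Hn n ω) atBot (nhds 0))
    (hHn_top : ∀ n ω, Tendsto (Hn n ω) atTop (nhds 1))
    (hH_mono : Monotone H) (hH_cont : Continuous H)
    (hH_bot : Tendsto H atBot (nhds 0)) (hH_top : Tendsto H atTop (nhds 1))
    (hconv : ∀ x : ℝ, ∀ ε : ℝ, 0 < ε →
      Tendsto (fun n => ℙ {ω | ε < |Hn n ω x - H x|}) atTop (nhds 0))
    (α : ℝ) (hα0 : 0 < α) (hα1 : α < 1)
    (hmeas : ∀ n, Measurable fun ω => sInf {x | 1 - α ≤ Hn n ω x}) :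
    Tendsto (fun n => ∫ ω, H (sInf {x | 1 - α ≤ Hn n ω x}))
      atTop (nhds (1 - α)) :=
  stmt_16_general Hn H hHn_mono hH_mono hH_cont hH_bot hH_top hconv α hα0 hα1 hmeas
end
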